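/- arXiv:math/0005252 — 6 statements merged into one kernel-verified Lean document; each statement's English description precedes it below -/
import Mathlib

section
/- Let r, s, R > 0 and let p : ι → EuclideanSpace ℝ (Fin 2) be a finite family of points such that each closed disk of radius r centered at p(i) is contained in the closed disk of radius R centered at the origin (equivalently ‖p(i)‖ ≤ R − r for all i), and such that the disks are pairwise at distance at least 2s, i.e. dist(p(i), p(j)) ≥ 2r + 2s whenever i ≠ j. Then the number of points satisfies card ι ≤ ((R + s)/(r + s))². -/
/-!
Enlarging every disk by `s` gives pairwise disjoint open disks of radius `r + s`, all inside
the disk of radius `R + s` about the origin. Comparing areas, which scale like the square of the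
radius, gives `card ι * (r + s)² ≤ (R + s)²`.
-/

open MeasureTheory Metric Module

theorem sum_measure_ball_le_of_pairwise_le_dist {X ι : Type*} [PseudoMetricSpace X]
    [MeasurableSpace X] [OpensMeasurableSpace X] [Fintype ι] (μ : Measure X) {p : ι → X}
    {c : X} {ρ t : ℝ} (hp : ∀ i, dist (p i) c ≤ t - ρ)
    (hsep : Pairwise fun i j => 2 * ρ ≤ dist (p i) (p j)) :
    ∑ i, μ (ball (p i) ρ) ≤ μ (ball c t) := by
  have hdisj : Pairwise (Function.onFun Disjoint fun i => ball (p i) ρ) := fun i j hij =>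
    ball_disjoint_ball (by linarith [hsep hij])
  have hsub : ∀ i, ball (p i) ρ ⊆ ball c t := fun i =>
    ball_subset_ball' (by linarith [hp i])
  calc ∑ i, μ (ball (p i) ρ) = μ (⋃ i, ball (p i) ρ) := by
        rw [measure_iUnion hdisj fun _ => measurableSet_ball, tsum_fintype]
    _ ≤ μ (ball c t) := measure_mono (Set.iUnion_subset hsub)

theorem card_le_div_pow_finrank_of_pairwise_le_dist {E ι : Type*} [NormedAddCommGroup E]
    [NormedSpace ℝ E] [FiniteDimensional ℝ E] [Fintype ι] {p : ι → E} {ρ t : ℝ} (hρ : 0 < ρ)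
    (ht : 0 ≤ t) (hp : ∀ i, ‖p i‖ ≤ t - ρ)
    (hsep : Pairwise fun i j => 2 * ρ ≤ dist (p i) (p j)) :
    (Fintype.card ι : ℝ) ≤ (t / ρ) ^ finrank ℝ E := by
  rcases isEmpty_or_nonempty ι with hι | ⟨⟨i₀⟩⟩
  · simp only [Fintype.card_eq_zero, Nat.cast_zero]
    positivity
  have htpos : 0 < t := by linarith [norm_nonneg (p i₀), hp i₀]
  borelize E
  let μ : Measure E := Measure.addHaar
  have hvol := sum_measure_ball_le_of_pairwise_le_dist μ (c := 0) (by simpa using hp) hsep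
  simp only [μ.addHaar_ball_of_pos _ hρ, μ.addHaar_ball_of_pos _ htpos, Finset.sum_const,
    Finset.card_univ, nsmul_eq_mul, ← mul_assoc] at hvol
  have hscaled := (ENNReal.mul_le_mul_iff_left (measure_ball_pos μ 0 one_pos).ne'
    measure_ball_lt_top.ne).mp hvol
  rw [← ENNReal.ofReal_natCast, ← ENNReal.ofReal_mul (by positivity),
    ENNReal.ofReal_le_ofReal_iff (by positivity)] at hscaled
  rwa [div_pow, le_div_iff₀ (by positivity)]

/-- At most `((R+s)/(r+s))²` disks of radius `r`, pairwise at distance at least `2s`,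
fit inside a disk of radius `R` in the Euclidean plane. -/
theorem euclidean_disk_packing_bound {ι : Type*} [Fintype ι] (r s R : ℝ)
    (hr : 0 < r) (hs : 0 < s) (hR : 0 < R)
    (p : ι → EuclideanSpace ℝ (Fin 2))
    (hin : ∀ i, ‖p i‖ ≤ R - r)
    (hsep : ∀ i j, i ≠ j → 2 * r + 2 * s ≤ dist (p i) (p j)) :
    (Fintype.card ι : ℝ) ≤ ((R + s) / (r + s)) ^ 2 := by
  have hbound := card_le_div_pow_finrank_of_pairwise_le_dist (p := p) (ρ := r + s) (t := R + s)
    (by positivity) (by positivity) (fun i => by linarith [hin i])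
    (fun i j hij => by linarith [hsep i j hij])
  rwa [finrank_euclideanSpace_fin] at hbound
end

section
/- Let z₀ ∈ ℍ and let r, s, R > 0. Then there exists a finite set T of points of ℍ, contained in the closed ball of radius R about z₀, whose points are pairwise at hyperbolic distance at least 2(r + s), with card T ≥ (e^R − 2) / (2·(cosh(2(r + s)) − 1)). -/
open UpperHalfPlane

set_option maxHeartbeats 1000000

namespace HypPack

open Real

noncomputable def hpt (z₀ : ℍ) (u v : ℝ) (hv : 0 < v) : ℍ :=
  UpperHalfPlane.mk ⟨z₀.re + z₀.im * u, z₀.im * v⟩ (mul_pos z₀.im_pos hv)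

lemma hpt_im (z₀ : ℍ) (u v : ℝ) (hv : 0 < v) : (hpt z₀ u v hv).im = z₀.im * v := rfl
lemma hpt_re (z₀ : ℍ) (u v : ℝ) (hv : 0 < v) : (hpt z₀ u v hv).re = z₀.re + z₀.im * u := rfl
lemma hpt_coe_im (z₀ : ℍ) (u v : ℝ) (hv : 0 < v) : ((hpt z₀ u v hv : ℍ) : ℂ).im = z₀.im * v := rfl
lemma hpt_coe_re (z₀ : ℍ) (u v : ℝ) (hv : 0 < v) : ((hpt z₀ u v hv : ℍ) : ℂ).re = z₀.re + z₀.im * u := rfl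

lemma hpt_self (z₀ : ℍ) : hpt z₀ 0 1 one_pos = z₀ := by
  apply UpperHalfPlane.ext
  apply Complex.ext
  · show z₀.re + z₀.im * 0 = _; simp [UpperHalfPlane.coe_re]
  · show z₀.im * 1 = _; simp [UpperHalfPlane.coe_im]

lemma hpt_dist (z₀ : ℍ) {u v u' v' : ℝ} (hv : 0 < v) (hv' : 0 < v') :
    dist (hpt z₀ u v hv) (hpt z₀ u' v' hv')
      = 2 * arsinh (√(((u - u') ^ 2 + (v - v') ^ 2) / (4 * (v * v')))) := by
  have hy := z₀.im_pos
  rw [UpperHalfPlane.dist_eq]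
  congr 2
  have h1 : dist ((hpt z₀ u v hv : ℍ) : ℂ) ((hpt z₀ u' v' hv' : ℍ) : ℂ)
      = z₀.im * √((u - u') ^ 2 + (v - v') ^ 2) := by
    rw [Complex.dist_eq_re_im, hpt_coe_re, hpt_coe_re, hpt_coe_im, hpt_coe_im,
      show (z₀.re + z₀.im * u - (z₀.re + z₀.im * u')) ^ 2 + (z₀.im * v - z₀.im * v') ^ 2
        = z₀.im ^ 2 * ((u - u') ^ 2 + (v - v') ^ 2) by ring,
      Real.sqrt_mul (sq_nonneg _), Real.sqrt_sq hy.le]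
  have h2 : √((hpt z₀ u v hv).im * (hpt z₀ u' v' hv').im) = z₀.im * √(v * v') := by
    rw [hpt_im, hpt_im, show z₀.im * v * (z₀.im * v') = z₀.im ^ 2 * (v * v') by ring,
      Real.sqrt_mul (sq_nonneg _), Real.sqrt_sq hy.le]
  rw [h1, h2, Real.sqrt_div (by positivity) (4 * (v * v')),
    show (4 : ℝ) * (v * v') = 2 ^ 2 * (v * v') by ring,
    Real.sqrt_mul (by norm_num : (0:ℝ) ≤ 2 ^ 2), Real.sqrt_sq (by norm_num : (0:ℝ) ≤ 2)]
  field_simp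

lemma hpt_dist_le (z₀ : ℍ) {u v u' v' ρ : ℝ} (hv : 0 < v) (hv' : 0 < v') (hρ : 0 ≤ ρ)
    (h : (u - u') ^ 2 + (v - v') ^ 2 ≤ 4 * (v * v') * Real.sinh (ρ / 2) ^ 2) :
    dist (hpt z₀ u v hv) (hpt z₀ u' v' hv') ≤ ρ := by
  rw [hpt_dist]
  have hsh : 0 ≤ Real.sinh (ρ / 2) := by
    rw [← Real.sinh_zero]; exact Real.sinh_le_sinh.2 (by linarith)
  calc 2 * arsinh (√(((u - u') ^ 2 + (v - v') ^ 2) / (4 * (v * v'))))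
      ≤ 2 * arsinh (Real.sinh (ρ / 2)) := by
        apply mul_le_mul_of_nonneg_left _ (by norm_num)
        apply Real.arsinh_le_arsinh.2
        rw [← Real.sqrt_sq hsh]
        apply Real.sqrt_le_sqrt
        rw [div_le_iff₀ (by positivity)]
        linarith
    _ = ρ := by rw [Real.arsinh_sinh]; ring

lemma le_hpt_dist (z₀ : ℍ) {u v u' v' ρ : ℝ} (hv : 0 < v) (hv' : 0 < v') (hρ : 0 ≤ ρ)
    (h : 4 * (v * v') * Real.sinh (ρ / 2) ^ 2 ≤ (u - u') ^ 2 + (v - v') ^ 2) :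
    ρ ≤ dist (hpt z₀ u v hv) (hpt z₀ u' v' hv') := by
  rw [hpt_dist]
  have hsh : 0 ≤ Real.sinh (ρ / 2) := by
    rw [← Real.sinh_zero]; exact Real.sinh_le_sinh.2 (by linarith)
  calc ρ = 2 * arsinh (Real.sinh (ρ / 2)) := by rw [Real.arsinh_sinh]; ring
    _ ≤ 2 * arsinh (√(((u - u') ^ 2 + (v - v') ^ 2) / (4 * (v * v')))) := by
        apply mul_le_mul_of_nonneg_left _ (by norm_num)
        apply Real.arsinh_le_arsinh.2
        rw [← Real.sqrt_sq hsh]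
        apply Real.sqrt_le_sqrt
        rw [le_div_iff₀ (by positivity)]
        linarith


lemma poly_key {δ : ℝ} (h0 : 0 ≤ δ) (h1 : δ ≤ 1) :
    (1 - δ) ^ 2 * (1 + δ) ^ 4 * (1 + (δ ^ 2 / 2) ^ 2) ^ 2
      ≤ 4 * (1 - (δ ^ 2 / 2) ^ 4) * (1 - δ ^ 2 / 2) ^ 5 := by
  have h2 : 0 ≤ 1 - δ := by linarith
  have key : 4 * (1 - (δ ^ 2 / 2) ^ 4) * (1 - δ ^ 2 / 2) ^ 5
      - (1 - δ) ^ 2 * (1 + δ) ^ 4 * (1 + (δ ^ 2 / 2) ^ 2) ^ 2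
      = (3 : ℝ) * (δ ^ 0 * (1 - δ) ^ 22) +
      (64 : ℝ) * (δ ^ 1 * (1 - δ) ^ 21) +
      (642 : ℝ) * (δ ^ 2 * (1 - δ) ^ 20) +
      (4024 : ℝ) * (δ ^ 3 * (1 - δ) ^ 19) +
      (35323/2 : ℝ) * (δ ^ 4 * (1 - δ) ^ 18) +
      (57642 : ℝ) * (δ ^ 5 * (1 - δ) ^ 17) +
      (144962 : ℝ) * (δ ^ 6 * (1 - δ) ^ 16) +
      (287146 : ℝ) * (δ ^ 7 * (1 - δ) ^ 15) +
      (7262135/16 : ℝ) * (δ ^ 8 * (1 - δ) ^ 14) +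
      (576101 : ℝ) * (δ ^ 9 * (1 - δ) ^ 13) +
      (2349097/4 : ℝ) * (δ ^ 10 * (1 - δ) ^ 12) +
      (955437/2 : ℝ) * (δ ^ 11 * (1 - δ) ^ 11) +
      (610829/2 : ℝ) * (δ ^ 12 * (1 - δ) ^ 10) +
      (596149/4 : ℝ) * (δ ^ 13 * (1 - δ) ^ 9) +
      (839311/16 : ℝ) * (δ ^ 14 * (1 - δ) ^ 8) +
      (11767 : ℝ) * (δ ^ 15 * (1 - δ) ^ 7) +
      (76599/64 : ℝ) * (δ ^ 16 * (1 - δ) ^ 6) +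
      (3617/32 : ℝ) * (δ ^ 17 * (1 - δ) ^ 5) +
      (27451/128 : ℝ) * (δ ^ 18 * (1 - δ) ^ 4) +
      (3999/32 : ℝ) * (δ ^ 19 * (1 - δ) ^ 3) +
      (65/2 : ℝ) * (δ ^ 20 * (1 - δ) ^ 2) +
      (61/16 : ℝ) * (δ ^ 21 * (1 - δ) ^ 1) +
      (15/128 : ℝ) * (δ ^ 22 * (1 - δ) ^ 0) := by ring
  have H : (0:ℝ) ≤ (3 : ℝ) * (δ ^ 0 * (1 - δ) ^ 22) +
      (64 : ℝ) * (δ ^ 1 * (1 - δ) ^ 21) +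
      (642 : ℝ) * (δ ^ 2 * (1 - δ) ^ 20) +
      (4024 : ℝ) * (δ ^ 3 * (1 - δ) ^ 19) +
      (35323/2 : ℝ) * (δ ^ 4 * (1 - δ) ^ 18) +
      (57642 : ℝ) * (δ ^ 5 * (1 - δ) ^ 17) +
      (144962 : ℝ) * (δ ^ 6 * (1 - δ) ^ 16) +
      (287146 : ℝ) * (δ ^ 7 * (1 - δ) ^ 15) +
      (7262135/16 : ℝ) * (δ ^ 8 * (1 - δ) ^ 14) +
      (576101 : ℝ) * (δ ^ 9 * (1 - δ) ^ 13) +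
      (2349097/4 : ℝ) * (δ ^ 10 * (1 - δ) ^ 12) +
      (955437/2 : ℝ) * (δ ^ 11 * (1 - δ) ^ 11) +
      (610829/2 : ℝ) * (δ ^ 12 * (1 - δ) ^ 10) +
      (596149/4 : ℝ) * (δ ^ 13 * (1 - δ) ^ 9) +
      (839311/16 : ℝ) * (δ ^ 14 * (1 - δ) ^ 8) +
      (11767 : ℝ) * (δ ^ 15 * (1 - δ) ^ 7) +
      (76599/64 : ℝ) * (δ ^ 16 * (1 - δ) ^ 6) +
      (3617/32 : ℝ) * (δ ^ 17 * (1 - δ) ^ 5) +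
      (27451/128 : ℝ) * (δ ^ 18 * (1 - δ) ^ 4) +
      (3999/32 : ℝ) * (δ ^ 19 * (1 - δ) ^ 3) +
      (65/2 : ℝ) * (δ ^ 20 * (1 - δ) ^ 2) +
      (61/16 : ℝ) * (δ ^ 21 * (1 - δ) ^ 1) +
      (15/128 : ℝ) * (δ ^ 22 * (1 - δ) ^ 0) := by
    repeat' apply add_nonneg
    all_goals exact mul_nonneg (by norm_num) (mul_nonneg (pow_nonneg h0 _) (pow_nonneg h2 _))
  linarith


lemma star (R : ℝ) (hR : 0 < R) (h2 : 2 < Real.exp R) :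
    Real.exp R - 2
      ≤ 4 * √(Real.sinh R * Real.cosh R * (1 - Real.exp (-R))) * (1 - 1 / √(Real.cosh R)) := by
  obtain ⟨t, htdef⟩ : ∃ t, t = Real.exp (-R) := ⟨_, rfl⟩
  rw [← htdef]
  have ht0 : 0 < t := htdef ▸ Real.exp_pos _
  have hEt : Real.exp R * t = 1 := by rw [htdef, ← Real.exp_add]; simp
  have ht1 : t < 1 / 2 := by nlinarith
  have hE : Real.exp R = 1 / t := by rw [eq_div_iff ht0.ne']; linarith
  obtain ⟨δ, hδdef⟩ : ∃ d, d = √(2 * t) := ⟨_, rfl⟩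
  have hδ0 : 0 ≤ δ := hδdef ▸ Real.sqrt_nonneg _
  have hδ2 : δ ^ 2 = 2 * t := hδdef ▸ Real.sq_sqrt (by positivity)
  have hδ1 : δ < 1 := by
    rw [hδdef, Real.sqrt_lt' one_pos]; nlinarith
  have ht2 : t ^ 2 < 1 / 4 := by nlinarith
  have ht4 : t ^ 4 < 1 := by nlinarith [sq_nonneg (t ^ 2)]
  have hprodt : 0 ≤ (1 - t ^ 4) * (1 - t) := by nlinarith
  obtain ⟨β, hβdef⟩ : ∃ b, b = √(2 * t / (1 + t ^ 2)) := ⟨_, rfl⟩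
  have hβ0 : 0 ≤ β := hβdef ▸ Real.sqrt_nonneg _
  have hβ2 : β ^ 2 = 2 * t / (1 + t ^ 2) := hβdef ▸ Real.sq_sqrt (by positivity)
  have hβδ : β ≤ δ := by
    rw [hβdef, hδdef]
    exact Real.sqrt_le_sqrt (div_le_self (by positivity) (by nlinarith))
  have hcosh : Real.cosh R = (1 + t ^ 2) / (2 * t) := by
    rw [Real.cosh_eq, hE, ← htdef]; field_simp
  have hsinh : Real.sinh R = (1 - t ^ 2) / (2 * t) := by
    rw [Real.sinh_eq, hE, ← htdef]; field_simp
  have h1c : 1 / √(Real.cosh R) = β := by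
    rw [hcosh, hβdef, one_div, ← Real.sqrt_inv]
    congr 1
    field_simp
  have hP : √(Real.sinh R * Real.cosh R * (1 - t)) = √((1 - t ^ 4) * (1 - t)) / (2 * t) := by
    rw [hsinh, hcosh,
      show (1 - t ^ 2) / (2 * t) * ((1 + t ^ 2) / (2 * t)) * (1 - t)
        = (1 - t ^ 4) * (1 - t) / (2 * t) ^ 2 by field_simp; ring,
      Real.sqrt_div (by nlinarith : (0:ℝ) ≤ (1 - t ^ 4) * (1 - t)) ((2 * t) ^ 2), Real.sqrt_sq (by positivity)]
  obtain ⟨γ, hγdef⟩ : ∃ g, g = √((1 - t ^ 4) * (1 - t)) := ⟨_, rfl⟩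
  rw [← hγdef] at hP
  have hγ0 : 0 ≤ γ := hγdef ▸ Real.sqrt_nonneg _
  have hγ2 : γ ^ 2 = (1 - t ^ 4) * (1 - t) := hγdef ▸ Real.sq_sqrt hprodt
  have ht' : t = δ ^ 2 / 2 := by rw [hδ2]; ring
  -- the key bound
  have h2t : (1 : ℝ) - 2 * t = (1 - δ) * (1 + δ) := by linear_combination hδ2
  have pk := poly_key hδ0 hδ1.le
  rw [← ht'] at pk
  have hstep : (1 - 2 * t) * ((1 + t ^ 2) * (1 + δ)) ≤ 2 * γ * (1 - t) ^ 2 := by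
    have ha0 : 0 ≤ (1 - 2 * t) * ((1 + t ^ 2) * (1 + δ)) :=
      mul_nonneg (by linarith) (mul_nonneg (by positivity) (by linarith))
    have hb0 : 0 ≤ 2 * γ * (1 - t) ^ 2 := by positivity
    have hsq : ((1 - 2 * t) * ((1 + t ^ 2) * (1 + δ))) ^ 2 ≤ (2 * γ * (1 - t) ^ 2) ^ 2 := by
      have e1 : ((1 - 2 * t) * ((1 + t ^ 2) * (1 + δ))) ^ 2
          = (1 - δ) ^ 2 * (1 + δ) ^ 4 * (1 + t ^ 2) ^ 2 := by rw [h2t]; ring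
      have e2 : (2 * γ * (1 - t) ^ 2) ^ 2 = 4 * (1 - t ^ 4) * (1 - t) ^ 5 := by
        calc (2 * γ * (1 - t) ^ 2) ^ 2 = 4 * ((1 - t ^ 4) * (1 - t)) * (1 - t) ^ 4 := by
              rw [← hγ2]; ring
          _ = 4 * (1 - t ^ 4) * (1 - t) ^ 5 := by ring
      rw [e1, e2]
      calc (1 - δ) ^ 2 * (1 + δ) ^ 4 * (1 + t ^ 2) ^ 2
          = (1 - δ) ^ 2 * (1 + δ) ^ 4 * (1 + (δ ^ 2 / 2) ^ 2) ^ 2 := by rw [← ht']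
        _ ≤ 4 * (1 - (δ ^ 2 / 2) ^ 4) * (1 - δ ^ 2 / 2) ^ 5 := poly_key hδ0 hδ1.le
        _ = 4 * (1 - t ^ 4) * (1 - t) ^ 5 := by rw [← ht']
    calc (1 - 2 * t) * ((1 + t ^ 2) * (1 + δ))
        = √(((1 - 2 * t) * ((1 + t ^ 2) * (1 + δ))) ^ 2) := (Real.sqrt_sq ha0).symm
      _ ≤ √((2 * γ * (1 - t) ^ 2) ^ 2) := Real.sqrt_le_sqrt hsq
      _ = 2 * γ * (1 - t) ^ 2 := Real.sqrt_sq hb0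
  have h1mβ : 1 - β = (1 - t) ^ 2 / ((1 + t ^ 2) * (1 + β)) := by
    rw [eq_div_iff (by positivity : ((1 + t ^ 2) * (1 + β)) ≠ 0)]
    have hb : β ^ 2 * (1 + t ^ 2) = 2 * t := by rw [hβ2]; field_simp
    linear_combination -hb
  have hmain : 1 - 2 * t ≤ 2 * (γ * (1 - β)) := by
    rw [h1mβ, show 2 * (γ * ((1 - t) ^ 2 / ((1 + t ^ 2) * (1 + β))))
      = (2 * γ * (1 - t) ^ 2) / ((1 + t ^ 2) * (1 + β)) by ring,
      le_div_iff₀ (by positivity)]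
    have haux : 0 ≤ (1 - 2 * t) * ((1 + t ^ 2) * (δ - β)) :=
      mul_nonneg (by linarith) (mul_nonneg (by positivity) (by linarith))
    linarith [hstep, haux]
  rw [hP, h1c, hE]
  rw [show 4 * (γ / (2 * t)) * (1 - β) = 2 * (γ * (1 - β)) / t by field_simp; ring,
    show 1 / t - 2 = (1 - 2 * t) / t by field_simp,
    div_le_div_iff₀ ht0 ht0]
  exact mul_le_mul_of_nonneg_right hmain ht0.le


lemma main (z₀ : ℍ) (R d : ℝ) (hR : 0 < R) (hd : 0 < d) :
    ∃ T : Finset ℍ,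
      (∀ z ∈ T, dist z z₀ ≤ R) ∧
      (∀ z ∈ T, ∀ w ∈ T, z ≠ w → d ≤ dist z w) ∧
      (Real.exp R - 2) / (4 * Real.sinh (d / 2) ^ 2) ≤ (T.card : ℝ) := by
  classical
  have hσ : 0 < Real.sinh (d / 2) := Real.sinh_pos_iff.2 (by linarith)
  by_cases hE2 : Real.exp R ≤ 2
  · refine ⟨∅, by simp, by simp, ?_⟩
    simp only [Finset.card_empty, Nat.cast_zero]
    exact div_nonpos_iff.2 (Or.inr ⟨by linarith, by positivity⟩)
  push_neg at hE2
  -- abbreviations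
  have hc1 : 1 ≤ Real.cosh R := Real.one_le_cosh R
  have hc0 : (0 : ℝ) < Real.cosh R := by linarith
  have hEt : Real.exp R * Real.exp (-R) = 1 := by rw [← Real.exp_add]; simp
  have ht0 : (0 : ℝ) < Real.exp (-R) := Real.exp_pos _
  have ht1 : Real.exp (-R) < 1 := by nlinarith
  have h2c : Real.exp R + Real.exp (-R) = 2 * Real.cosh R := by rw [Real.cosh_eq]; ring
  have hsc : Real.exp R - Real.cosh R = Real.sinh R := by
    rw [Real.cosh_eq, Real.sinh_eq]; ring
  have hs0 : 0 ≤ Real.sinh R := by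
    rw [← Real.sinh_zero]; exact Real.sinh_le_sinh.2 hR.le
  have htc : Real.exp (-R) * Real.cosh R ≤ 1 := by
    rw [Real.cosh_eq]; nlinarith
  -- levels
  obtain ⟨v, hvdef⟩ : ∃ v : ℕ → ℝ, v = fun (m : ℕ) => Real.exp ((m : ℝ) * d) / Real.cosh R := ⟨_, rfl⟩
  have hvm : ∀ m : ℕ, v m = Real.exp (m * d) / Real.cosh R := fun m => by rw [hvdef]
  have hv0 : ∀ m : ℕ, 0 < v m := fun m => by rw [hvm]; positivity
  obtain ⟨M, hMdef⟩ : ∃ M : ℕ, M = ⌊Real.log (Real.cosh R) / d⌋₊ + 1 := ⟨_, rfl⟩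
  have hlogc : 0 ≤ Real.log (Real.cosh R) := Real.log_nonneg hc1
  have hv1 : ∀ m < M, v m ≤ 1 := by
    intro m hm
    rw [hvm, div_le_one hc0, ← Real.exp_log hc0, Real.exp_le_exp]
    have hm' : m ≤ ⌊Real.log (Real.cosh R) / d⌋₊ := by omega
    have := (Nat.le_floor_iff (by positivity)).1 hm'
    rw [le_div_iff₀ hd] at this
    linarith
  have hvc : ∀ m : ℕ, 1 ≤ Real.cosh R * v m := by
    intro m
    rw [hvm, mul_div_cancel₀ _ hc0.ne']
    exact Real.one_le_exp (by positivity)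
  have hvt : ∀ m : ℕ, Real.exp (-R) ≤ v m := by
    intro m
    nlinarith [hvc m, hv0 m, htc, ht0]
  have hvE : ∀ m < M, v m < Real.exp R := fun m hm => lt_of_le_of_lt (hv1 m hm) (by linarith)
  have hprodnn : ∀ m < M, 0 ≤ (v m - Real.exp (-R)) * (Real.exp R - v m) := by
    intro m hm
    exact mul_nonneg (by linarith [hvt m]) (by linarith [hvE m hm])
  -- widths and counts
  obtain ⟨U, hUdef⟩ : ∃ U : ℕ → ℝ,
      U = fun m => √((v m - Real.exp (-R)) * (Real.exp R - v m)) := ⟨_, rfl⟩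
  have hUm : ∀ m, U m = √((v m - Real.exp (-R)) * (Real.exp R - v m)) := fun m => by rw [hUdef]
  have hU0 : ∀ m, 0 ≤ U m := fun m => by rw [hUm]; positivity
  have hU2 : ∀ m < M, (U m) ^ 2 = (v m - Real.exp (-R)) * (Real.exp R - v m) := by
    intro m hm
    rw [hUm]; exact Real.sq_sqrt (hprodnn m hm)
  obtain ⟨N, hNdef⟩ : ∃ N : ℕ → ℕ,
      N = fun m => ⌊U m / (Real.sinh (d / 2) * v m)⌋₊ + 1 := ⟨_, rfl⟩
  have hNm : ∀ m, N m = ⌊U m / (Real.sinh (d / 2) * v m)⌋₊ + 1 := fun m => by rw [hNdef]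
  have hNlt : ∀ m, U m / (Real.sinh (d / 2) * v m) < (N m : ℝ) := by
    intro m
    rw [hNm]
    push_cast
    exact Nat.lt_floor_add_one _
  have hjle : ∀ m, ∀ j < N m, (j : ℝ) * (Real.sinh (d / 2) * v m) ≤ U m := by
    intro m j hj
    have hj' : j ≤ ⌊U m / (Real.sinh (d / 2) * v m)⌋₊ := by
      rw [hNm] at hj; omega
    have h1 : (j : ℝ) ≤ U m / (Real.sinh (d / 2) * v m) := by
      refine le_trans (Nat.cast_le.2 hj') ?_
      exact Nat.floor_le (div_nonneg (hU0 m) (mul_pos hσ (hv0 m)).le)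
    rwa [le_div_iff₀ (mul_pos hσ (hv0 m))] at h1
  -- radius bound
  have hshR : Real.sinh (R / 2) ^ 2 = (Real.cosh R - 1) / 2 := by
    have e1 : Real.cosh (2 * (R / 2)) = Real.cosh (R / 2) ^ 2 + Real.sinh (R / 2) ^ 2 :=
      Real.cosh_two_mul _
    have e2 : Real.cosh (R / 2) ^ 2 = 1 + Real.sinh (R / 2) ^ 2 := Real.cosh_sq' _
    have e3 : (2 : ℝ) * (R / 2) = R := by ring
    rw [e3, e2] at e1
    linarith
  have hrad : ∀ m < M, ∀ j < N m,
      dist (hpt z₀ (-U m + 2 * Real.sinh (d / 2) * v m * j) (v m) (hv0 m)) z₀ ≤ R := by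
    intro m hm j hj
    have h2σ : 0 ≤ 2 * Real.sinh (d / 2) * v m * (j : ℝ) :=
      mul_nonneg (mul_nonneg (mul_nonneg (by norm_num) hσ.le) (hv0 m).le) (Nat.cast_nonneg j)
    have hu2 : (-U m + 2 * Real.sinh (d / 2) * v m * j) ^ 2 ≤ (U m) ^ 2 :=
      sq_le_sq' (by linarith) (by linarith [hjle m j hj])
    have hiden : (v m - Real.exp (-R)) * (Real.exp R - v m) + (v m - 1) ^ 2
        = 2 * Real.cosh R * v m - 2 * v m := by
      linear_combination (v m) * h2c - hEt
    have hU2m := hU2 m hm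
    have h := hpt_dist_le z₀ (hv0 m) one_pos hR.le (u := -U m + 2 * Real.sinh (d / 2) * v m * j)
      (u' := 0) (v' := 1) (by rw [hshR]; linarith)
    rwa [hpt_self] at h
  -- separation
  have hkey : ∀ m n : ℕ, m < n →
      4 * Real.exp (m * d) * Real.exp (n * d) * Real.sinh (d / 2) ^ 2
        ≤ (Real.exp (m * d) - Real.exp (n * d)) ^ 2 := by
    intro m n hmn
    have hcast : (m : ℝ) + 1 ≤ (n : ℝ) := by exact_mod_cast hmn
    have hg : d / 2 ≤ ((n : ℝ) * d - (m : ℝ) * d) / 2 := by nlinarith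
    have hsg : Real.sinh (d / 2) ≤ Real.sinh (((n : ℝ) * d - (m : ℝ) * d) / 2) :=
      Real.sinh_le_sinh.2 hg
    have hA2 : Real.exp ((m : ℝ) * d / 2) ^ 2 = Real.exp ((m : ℝ) * d) := by
      rw [pow_two, ← Real.exp_add]; congr 1; ring
    have hB2 : Real.exp ((n : ℝ) * d / 2) ^ 2 = Real.exp ((n : ℝ) * d) := by
      rw [pow_two, ← Real.exp_add]; congr 1; ring
    have hEq : (Real.exp ((m : ℝ) * d) - Real.exp ((n : ℝ) * d)) ^ 2
        = 4 * Real.exp ((m : ℝ) * d) * Real.exp ((n : ℝ) * d)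
          * Real.sinh (((n : ℝ) * d - (m : ℝ) * d) / 2) ^ 2 := by
      have hg1 : Real.exp (((n : ℝ) * d - (m : ℝ) * d) / 2)
          = Real.exp ((n : ℝ) * d / 2) / Real.exp ((m : ℝ) * d / 2) := by
        rw [← Real.exp_sub]; congr 1; ring
      have hg2 : Real.exp (-(((n : ℝ) * d - (m : ℝ) * d) / 2))
          = Real.exp ((m : ℝ) * d / 2) / Real.exp ((n : ℝ) * d / 2) := by
        rw [← Real.exp_sub]; congr 1; ring
      have hA0 : Real.exp ((m : ℝ) * d / 2) ≠ 0 := (Real.exp_pos _).ne'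
      have hB0 : Real.exp ((n : ℝ) * d / 2) ≠ 0 := (Real.exp_pos _).ne'
      rw [Real.sinh_eq, hg1, hg2, ← hA2, ← hB2]
      field_simp
      ring
    have hsq : Real.sinh (d / 2) ^ 2 ≤ Real.sinh (((n : ℝ) * d - (m : ℝ) * d) / 2) ^ 2 :=
      pow_le_pow_left₀ hσ.le hsg 2
    calc 4 * Real.exp (m * d) * Real.exp (n * d) * Real.sinh (d / 2) ^ 2
        ≤ 4 * Real.exp (m * d) * Real.exp (n * d)
          * Real.sinh (((n : ℝ) * d - (m : ℝ) * d) / 2) ^ 2 := by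
          apply mul_le_mul_of_nonneg_left hsq (by positivity)
      _ = (Real.exp ((m : ℝ) * d) - Real.exp ((n : ℝ) * d)) ^ 2 := hEq.symm
  have hcross : ∀ m n : ℕ, m ≠ n →
      4 * (v m * v n) * Real.sinh (d / 2) ^ 2 ≤ (v m - v n) ^ 2 := by
    intro m n hmn
    have main2 : ∀ m n : ℕ, m < n →
        4 * (v m * v n) * Real.sinh (d / 2) ^ 2 ≤ (v m - v n) ^ 2 := by
      intro m n h
      have hk := hkey m n h
      have hk2 := mul_le_mul_of_nonneg_right hk
        (le_of_lt (show (0:ℝ) < (Real.cosh R)⁻¹ ^ 2 by positivity))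
      rw [hvm, hvm]
      have e1 : Real.exp (↑m * d) / Real.cosh R = Real.exp (↑m * d) * (Real.cosh R)⁻¹ := by ring
      have e2 : Real.exp (↑n * d) / Real.cosh R = Real.exp (↑n * d) * (Real.cosh R)⁻¹ := by ring
      rw [e1, e2]
      nlinarith [hk2]
    rcases lt_or_gt_of_ne hmn with h | h
    · exact main2 m n h
    · have := main2 n m h
      nlinarith [this]
  have hsep : ∀ m j n k, m < M → n < M → j < N m → k < N n → ¬(m = n ∧ j = k) →
      d ≤ dist (hpt z₀ (-U m + 2 * Real.sinh (d / 2) * v m * j) (v m) (hv0 m))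
        (hpt z₀ (-U n + 2 * Real.sinh (d / 2) * v n * k) (v n) (hv0 n)) := by
    intro m j n k hm hn hj hk hne
    apply le_hpt_dist z₀ (hv0 m) (hv0 n) hd.le
    by_cases hmn : m = n
    · subst hmn
      have hjk : j ≠ k := fun h => hne ⟨rfl, h⟩
      have hjk1 : (1 : ℝ) ≤ ((j : ℝ) - (k : ℝ)) ^ 2 := by
        rcases lt_or_gt_of_ne hjk with h | h
        · have : (j : ℝ) + 1 ≤ (k : ℝ) := by exact_mod_cast h
          nlinarith
        · have : (k : ℝ) + 1 ≤ (j : ℝ) := by exact_mod_cast h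
          nlinarith
      have haux : 0 ≤ 4 * Real.sinh (d / 2) ^ 2 * (v m) ^ 2 * (((j : ℝ) - (k : ℝ)) ^ 2 - 1) := by
        apply mul_nonneg (by positivity) (by linarith)
      nlinarith [haux, sq_nonneg (v m - v m)]
    · have := hcross m n hmn
      nlinarith [sq_nonneg (-U m + 2 * Real.sinh (d / 2) * v m * j - (-U n + 2 * Real.sinh (d / 2) * v n * k))]
  -- the finset
  refine ⟨((Finset.range M).sigma fun m => Finset.range (N m)).image
      (fun p => hpt z₀ (-U p.1 + 2 * Real.sinh (d / 2) * v p.1 * p.2) (v p.1) (hv0 p.1)),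
      ?_, ?_, ?_⟩
  · intro z hz
    obtain ⟨p, hp, rfl⟩ := Finset.mem_image.1 hz
    rw [Finset.mem_sigma, Finset.mem_range, Finset.mem_range] at hp
    exact hrad p.1 hp.1 p.2 hp.2
  · intro z hz w hw hzw
    obtain ⟨p, hp, rfl⟩ := Finset.mem_image.1 hz
    obtain ⟨q, hq, rfl⟩ := Finset.mem_image.1 hw
    rw [Finset.mem_sigma, Finset.mem_range, Finset.mem_range] at hp hq
    apply hsep p.1 p.2 q.1 q.2 hp.1 hq.1 hp.2 hq.2
    rintro ⟨h1, h2⟩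
    exact hzw (by cases p; cases q; simp_all)
  · -- counting
    have hinj : Set.InjOn
        (fun p : Σ _ : ℕ, ℕ => hpt z₀ (-U p.1 + 2 * Real.sinh (d / 2) * v p.1 * p.2) (v p.1) (hv0 p.1))
        ((Finset.range M).sigma fun m => Finset.range (N m)) := by
      intro p hp q hq heq
      rw [Finset.mem_coe, Finset.mem_sigma, Finset.mem_range, Finset.mem_range] at hp hq
      by_contra hne
      have hne' : ¬(p.1 = q.1 ∧ p.2 = q.2) := by
        rintro ⟨h1, h2⟩
        exact hne (Sigma.ext h1 (heq_of_eq h2))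
      have hd' := hsep p.1 p.2 q.1 q.2 hp.1 hq.1 hp.2 hq.2 hne'
      simp only at heq
      rw [heq, dist_self] at hd'
      linarith
    have hcard : ((((Finset.range M).sigma fun m => Finset.range (N m)).image
        (fun p : Σ _ : ℕ, ℕ => hpt z₀ (-U p.1 + 2 * Real.sinh (d / 2) * v p.1 * p.2) (v p.1) (hv0 p.1))).card : ℝ)
        = ∑ m ∈ Finset.range M, (N m : ℝ) := by
      rw [Finset.card_image_of_injOn hinj, Finset.card_sigma]
      push_cast
      simp
    rw [hcard]
    obtain ⟨P, hPdef⟩ : ∃ P, P = √(Real.sinh R * Real.cosh R * (1 - Real.exp (-R))) := ⟨_, rfl⟩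
    have hP0 : 0 ≤ P := hPdef ▸ Real.sqrt_nonneg _
    obtain ⟨x, hxdef⟩ : ∃ x, x = Real.exp (-(d / 2)) := ⟨_, rfl⟩
    have hx0 : 0 < x := hxdef ▸ Real.exp_pos _
    have hx1 : x < 1 := by rw [hxdef, Real.exp_lt_one_iff]; linarith
    have hscnn : 0 ≤ Real.sinh R * Real.cosh R * (1 - Real.exp (-R)) := by
      apply mul_nonneg (mul_nonneg hs0 hc0.le); linarith
    -- per-term bound
    have hPterm : ∀ m < M, P * x ^ m ≤ Real.sinh (d / 2) * (N m : ℝ) := by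
      intro m hm
      have hxm : x ^ m = Real.exp (-((m : ℝ) * d) / 2) := by
        rw [hxdef, ← Real.exp_nat_mul]; congr 1; ring
      have hxm2 : x ^ m = √(Real.exp (-((m : ℝ) * d))) := by
        rw [hxm, Real.exp_half]
      have hemd : Real.exp (-((m : ℝ) * d)) * Real.exp ((m : ℝ) * d) = 1 := by
        rw [← Real.exp_add]; simp
      have hone : Real.cosh R * Real.exp (-((m : ℝ) * d)) * v m = 1 := by
        rw [hvm m]
        field_simp
        linear_combination hemd
      have hfact : (v m - Real.exp (-R)) * (Real.exp R - v m)
          = (Real.exp R * v m - 1) * (1 - Real.exp (-R) * v m) := by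
        linear_combination ((v m) ^ 2 - 1) * hEt
      have hsv : Real.sinh R * v m ≤ Real.exp R * v m - 1 := by
        have e : Real.sinh R * v m = Real.exp R * v m - Real.cosh R * v m := by
          linear_combination (v m) * hsc.symm
        linarith [hvc m]
      have h1tv : 1 - Real.exp (-R) ≤ 1 - Real.exp (-R) * v m := by
        nlinarith [hv1 m hm, ht0]
      have hEv1 : (0 : ℝ) ≤ Real.exp R * v m - 1 := by
        have : Real.cosh R * v m ≤ Real.exp R * v m := by
          nlinarith [hv0 m, ht0]
        linarith [hvc m]
      have hmul := mul_le_mul hsv h1tv (by nlinarith [ht0, hv1 m hm]) hEv1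
      have hkey2 : Real.sinh R * Real.cosh R * (1 - Real.exp (-R)) * Real.exp (-((m : ℝ) * d)) * (v m) ^ 2
          ≤ (v m - Real.exp (-R)) * (Real.exp R - v m) := by
        calc Real.sinh R * Real.cosh R * (1 - Real.exp (-R)) * Real.exp (-((m : ℝ) * d)) * (v m) ^ 2
            = (Real.sinh R * v m) * (1 - Real.exp (-R)) * (Real.cosh R * Real.exp (-((m : ℝ) * d)) * v m) := by
              ring
          _ = (Real.sinh R * v m) * (1 - Real.exp (-R)) := by rw [hone, mul_one]
          _ ≤ (Real.exp R * v m - 1) * (1 - Real.exp (-R) * v m) := hmul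
          _ = (v m - Real.exp (-R)) * (Real.exp R - v m) := hfact.symm
      have hPxm : P * x ^ m
          = √(Real.sinh R * Real.cosh R * (1 - Real.exp (-R)) * Real.exp (-((m : ℝ) * d))) := by
        rw [hPdef, hxm2, ← Real.sqrt_mul hscnn]
      have hUv : U m / v m = √((v m - Real.exp (-R)) * (Real.exp R - v m) / (v m) ^ 2) := by
        rw [hUm, Real.sqrt_div (hprodnn m hm), Real.sqrt_sq (hv0 m).le]
      have hle : P * x ^ m ≤ U m / v m := by
        rw [hPxm, hUv]
        apply Real.sqrt_le_sqrt
        rw [le_div_iff₀ (pow_pos (hv0 m) 2)]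
        linarith [hkey2]
      have hrw : U m / v m = Real.sinh (d / 2) * (U m / (Real.sinh (d / 2) * v m)) := by
        rw [← mul_div_assoc, mul_div_mul_left _ _ hσ.ne']
      calc P * x ^ m ≤ U m / v m := hle
        _ = Real.sinh (d / 2) * (U m / (Real.sinh (d / 2) * v m)) := hrw
        _ ≤ Real.sinh (d / 2) * (N m : ℝ) :=
            mul_le_mul_of_nonneg_left (hNlt m).le hσ.le
    have hsum : ∑ m ∈ Finset.range M, P * x ^ m
        ≤ ∑ m ∈ Finset.range M, Real.sinh (d / 2) * (N m : ℝ) :=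
      Finset.sum_le_sum (fun m hm => hPterm m (Finset.mem_range.1 hm))
    rw [← Finset.mul_sum, ← Finset.mul_sum] at hsum
    have hgeom : ∑ m ∈ Finset.range M, x ^ m = (1 - x ^ M) / (1 - x) := by
      rw [geom_sum_eq hx1.ne M]
      have h1 : x - 1 ≠ 0 := by intro h; nlinarith [h]
      have h2 : (1 : ℝ) - x ≠ 0 := by intro h; nlinarith [h]
      field_simp
      ring
    rw [hgeom] at hsum
    -- bound x ^ M from above
    have hxM : x ^ M ≤ 1 / √(Real.cosh R) := by
      have h1 : Real.log (Real.cosh R) < M * d := by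
        have h := Nat.lt_floor_add_one (Real.log (Real.cosh R) / d)
        rw [div_lt_iff₀ hd] at h
        calc Real.log (Real.cosh R) < (↑⌊Real.log (Real.cosh R) / d⌋₊ + 1) * d := h
          _ = (M : ℝ) * d := by rw [hMdef]; push_cast; ring
      have h2 : x ^ M = Real.exp (-((M : ℝ) * d) / 2) := by
        rw [hxdef, ← Real.exp_nat_mul]; congr 1; ring
      have h3 : Real.exp (-((M : ℝ) * d) / 2) ≤ Real.exp (-Real.log (Real.cosh R) / 2) :=
        Real.exp_le_exp.2 (by linarith)
      have h4 : Real.exp (-Real.log (Real.cosh R) / 2) = 1 / √(Real.cosh R) := by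
        rw [Real.exp_half, Real.exp_neg, Real.exp_log hc0, Real.sqrt_inv, one_div]
      calc x ^ M = Real.exp (-((M : ℝ) * d) / 2) := h2
        _ ≤ Real.exp (-Real.log (Real.cosh R) / 2) := h3
        _ = 1 / √(Real.cosh R) := h4
    have hQ0 : 0 ≤ 1 - 1 / √(Real.cosh R) := by
      have h5 : (1 : ℝ) ≤ √(Real.cosh R) := Real.one_le_sqrt.2 hc1
      have h6 : 1 / √(Real.cosh R) ≤ 1 := by
        rw [div_le_one (by linarith)]; exact h5
      linarith
    have h1x : 0 < 1 - x := by linarith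
    have hsN0 : (0 : ℝ) ≤ ∑ m ∈ Finset.range M, (N m : ℝ) := by positivity
    have hsum2 := mul_le_mul_of_nonneg_right hsum h1x.le
    have e7 : P * ((1 - x ^ M) / (1 - x)) * (1 - x) = P * (1 - x ^ M) := by
      field_simp
    rw [e7] at hsum2
    -- hsum2 : P * (1 - x ^ M) ≤ sinh (d/2) * (∑ ...) * (1 - x)
    have hσx : 1 - x ≤ Real.sinh (d / 2) := by
      have hex : Real.exp (d / 2) * x = 1 := by rw [hxdef, ← Real.exp_add]; simp
      rw [Real.sinh_eq, ← hxdef]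
      nlinarith [sq_nonneg (Real.exp (d / 2) - 1), Real.exp_pos (d / 2), hx0]
    have hstar := star R hR hE2
    rw [← hPdef] at hstar
    have hQle : 1 - 1 / √(Real.cosh R) ≤ 1 - x ^ M := by linarith [hxM]
    have hA : Real.exp R - 2 ≤ 4 * (P * (1 - x ^ M)) := by
      calc Real.exp R - 2 ≤ 4 * P * (1 - 1 / √(Real.cosh R)) := hstar
        _ ≤ 4 * (P * (1 - x ^ M)) := by
            have h := mul_le_mul_of_nonneg_left hQle (by linarith : (0:ℝ) ≤ 4 * P)
            linarith [h]
    have hC : Real.sinh (d / 2) * (∑ m ∈ Finset.range M, (N m : ℝ)) * (1 - x)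
        ≤ Real.sinh (d / 2) * Real.sinh (d / 2) * (∑ m ∈ Finset.range M, (N m : ℝ)) := by
      have h := mul_le_mul_of_nonneg_right
        (mul_le_mul_of_nonneg_left hσx hσ.le) hsN0
      linarith [h]
    have h4σ : (0 : ℝ) < 4 * Real.sinh (d / 2) ^ 2 :=
      mul_pos (by norm_num) (pow_pos hσ 2)
    rw [div_le_iff₀ h4σ]
    linarith [hA, hsum2, hC]


end HypPack

/-- A lower bound for the maximal number of disks of radius `r`, pairwise at distance at
least `2s`, in a hyperbolic disk of radius `R`: there is a set of at least
`(e^R - 2)/(2(cosh(2(r+s)) - 1))` points in the ball of radius `R` about `z₀` that are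
pairwise at hyperbolic distance at least `2(r+s)`. -/
theorem hyperbolic_disk_packing_bound (z₀ : UpperHalfPlane) (r s R : ℝ)
    (hr : 0 < r) (hs : 0 < s) (hR : 0 < R) :
    ∃ T : Finset UpperHalfPlane,
      (∀ z ∈ T, dist z z₀ ≤ R) ∧
      (∀ z ∈ T, ∀ w ∈ T, z ≠ w → 2 * (r + s) ≤ dist z w) ∧
      (Real.exp R - 2) / (2 * (Real.cosh (2 * (r + s)) - 1)) ≤ (T.card : ℝ) := by
  obtain ⟨T, h1, h2, h3⟩ := HypPack.main z₀ R (2 * (r + s)) hR (by linarith)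
  refine ⟨T, h1, h2, ?_⟩
  have e : 2 * (Real.cosh (2 * (r + s)) - 1) = 4 * Real.sinh (2 * (r + s) / 2) ^ 2 := by
    have e1 : Real.cosh (2 * (r + s)) = Real.cosh (r + s) ^ 2 + Real.sinh (r + s) ^ 2 :=
      Real.cosh_two_mul _
    have e2 : Real.cosh (r + s) ^ 2 = 1 + Real.sinh (r + s) ^ 2 := Real.cosh_sq' _
    have e3 : 2 * (r + s) / 2 = r + s := by ring
    rw [e3, e1, e2]; ring
  rw [e]
  exact h3
end

section
/- Let Γ be a group with a finite symmetric generating set S and word length ℓ_S, let λ ≥ 1 and ε ≥ 0, and let ψ : Γ → ℍ ×₂ ℝ be a map satisfying (1/λ)·ℓ_S(u⁻¹v) − ε ≤ dist(ψ(u), ψ(v)) ≤ λ·ℓ_S(u⁻¹v) + ε for all u, v ∈ Γ. Then for every R > 0 there exist constants A, B > 0 such that for every n ∈ ℕ, the number of elements u ∈ Γ with ℓ_S(u) ≤ n and with the ℍ-coordinate of ψ(u) at hyperbolic distance at most R from the ℍ-coordinate of ψ(1) is at most A·n + B. -/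
open UpperHalfPlane

/-- `ℍ ×₂ ℝ`: the product of the hyperbolic plane and the real line with the ℓ² metric. -/
abbrev H2R := WithLp 2 (UpperHalfPlane × ℝ)

/-- The horizontal (ℍ-) coordinate of a point of `ℍ ×₂ ℝ`. -/
noncomputable def horiz (p : H2R) : UpperHalfPlane := (WithLp.equiv 2 (UpperHalfPlane × ℝ) p).1

/-- The word length of `g` with respect to a generating set `S`: the least `n` such that
`g` is a product of `n` elements of `S`. -/
noncomputable def wordLength {G : Type*} [Group G] (S : Set G) (g : G) : ℕ :=
  sInf {n : ℕ | ∃ f : Fin n → G, (∀ i, f i ∈ S) ∧ (List.ofFn f).prod = g}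

/-!
Write `T` for the set being counted. By the upper quasi-isometry bound, the height (vertical
coordinate) of `ψ u` for `u ∈ T` lies within `λ n + ε` of that of `ψ 1`, so `T` falls into at most
`2 (λ n + ε) + 2` slices according to the integer part of the height. Two points of one slice lie in
the cylinder of radius `R` and differ in height by less than `1`, so they are at distance at most
`2 R + 1`; the lower quasi-isometry bound then gives `ℓ_S (u⁻¹ v) ≤ N := ⌈λ (2 R + 1 + ε)⌉`. Hence
each slice has at most as many elements as the word-length ball of radius `N`.
-/

section WordLength

variable {G : Type*} [Group G] {S : Set G}

theorem wordLength_one : wordLength S 1 = 0 :=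
  Nat.eq_zero_of_le_zero <| Nat.sInf_le ⟨Fin.elim0, fun i => i.elim0, by simp⟩

theorem exists_ofFn_prod_eq_wordLength (hSsymm : S = S⁻¹) (hSgen : Subgroup.closure S = ⊤)
    (g : G) : ∃ f : Fin (wordLength S g) → G, (∀ i, f i ∈ S) ∧ (List.ofFn f).prod = g := by
  suffices hrep : {n | ∃ f : Fin n → G, (∀ i, f i ∈ S) ∧ (List.ofFn f).prod = g}.Nonempty from
    Nat.sInf_mem hrep
  have hg : g ∈ (Subgroup.closure S).toSubmonoid := hSgen ▸ Subgroup.mem_top g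
  rw [Subgroup.closure_toSubmonoid, ← hSsymm, Set.union_self] at hg
  obtain ⟨l, hlS, rfl⟩ := Submonoid.exists_list_of_mem_closure hg
  exact ⟨l.length, l.get, fun i => hlS _ (l.get_mem i), by rw [List.ofFn_get]⟩

theorem finite_setOf_wordLength_le (hS : S.Finite) (hSsymm : S = S⁻¹)
    (hSgen : Subgroup.closure S = ⊤) (n : ℕ) : {g : G | wordLength S g ≤ n}.Finite := by
  refine Set.Finite.subset (Set.Finite.biUnion (Finset.range (n + 1)).finite_toSet
    fun m _ => ((Set.Finite.pi fun _ => hS).image fun f : Fin m → G => (List.ofFn f).prod))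
    fun g hg => ?_
  obtain ⟨f, hfS, hprod⟩ := exists_ofFn_prod_eq_wordLength hSsymm hSgen g
  simp only [Set.mem_iUnion, Finset.coe_range, Set.mem_Iio]
  exact ⟨wordLength S g, Nat.lt_succ_of_le hg, f, fun i _ => hfS i, hprod⟩

/-- Such a set lies in a left translate of the ball of radius `N`. -/
theorem ncard_le_of_forall_wordLength_inv_mul_le (hS : S.Finite) (hSsymm : S = S⁻¹)
    (hSgen : Subgroup.closure S = ⊤) {T : Set G} {N : ℕ}
    (hT : ∀ u ∈ T, ∀ v ∈ T, wordLength S (u⁻¹ * v) ≤ N) :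
    T.ncard ≤ {g : G | wordLength S g ≤ N}.ncard := by
  rcases T.eq_empty_or_nonempty with rfl | ⟨u, hu⟩
  · simp
  have hball := finite_setOf_wordLength_le hS hSsymm hSgen N
  calc T.ncard ≤ ((u * ·) '' {g : G | wordLength S g ≤ N}).ncard :=
        Set.ncard_le_ncard (fun v hv => ⟨u⁻¹ * v, hT u hu v hv, mul_inv_cancel_left u v⟩)
          (hball.image _)
    _ = _ := Set.ncard_image_of_injective _ (mul_right_injective u)

theorem wordLength_inv_mul_le_of_dist_le {X : Type*} [PseudoMetricSpace X] {ψ : G → X}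
    {lam eps r : ℝ} (hlam : 0 < lam)
    (hlow : ∀ u v : G, (1 / lam) * (wordLength S (u⁻¹ * v) : ℝ) - eps ≤ dist (ψ u) (ψ v))
    {u v : G} (huv : dist (ψ u) (ψ v) ≤ r) : wordLength S (u⁻¹ * v) ≤ ⌈lam * (r + eps)⌉₊ := by
  have hword : (wordLength S (u⁻¹ * v) : ℝ) ≤ lam * (r + eps) := by
    have := hlow u v
    rw [one_div_mul_eq_div, div_sub' hlam.ne', div_le_iff₀ hlam] at this
    nlinarith
  exact_mod_cast hword.trans (Nat.le_ceil _)

end WordLength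

theorem card_Icc_floor_le {a b : ℝ} (hab : a ≤ b) :
    ((Finset.Icc ⌊a⌋ ⌊b⌋).card : ℝ) ≤ b - a + 2 := by
  have hfloor : ⌊a⌋ ≤ ⌊b⌋ := Int.floor_mono hab
  rw [Int.card_Icc, ← Int.cast_natCast, Int.toNat_of_nonneg (by omega)]
  push_cast
  linarith [Int.floor_le b, Int.lt_floor_add_one a]

theorem ncard_le_of_floor_fibers {α : Type*} {T : Set α} (hT : T.Finite) (h : α → ℝ)
    {c D : ℝ} {M : ℕ} (hD : 0 ≤ D) (hrange : ∀ u ∈ T, |h u - c| ≤ D)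
    (hfiber : ∀ k : ℤ, {u ∈ T | ⌊h u⌋ = k}.ncard ≤ M) :
    (T.ncard : ℝ) ≤ M * (2 * D + 2) := by
  classical
  obtain ⟨F, rfl⟩ := hT.exists_finset_coe
  have hcard : F.card ≤ M * (F.image fun u => ⌊h u⌋).card :=
    Finset.card_le_mul_card_image F M fun k _ => by
      simpa [← Set.ncard_coe_finset, Finset.coe_filter] using hfiber k
  have himage : F.image (fun u => ⌊h u⌋) ⊆ Finset.Icc ⌊c - D⌋ ⌊c + D⌋ := by
    simp only [Finset.image_subset_iff, Finset.mem_Icc]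
    intro u hu
    obtain ⟨hlow, hup⟩ := abs_le.mp (hrange u hu)
    exact ⟨Int.floor_mono (by linarith), Int.floor_mono (by linarith)⟩
  rw [Set.ncard_coe_finset]
  calc (F.card : ℝ) ≤ M * (F.image fun u => ⌊h u⌋).card := by exact_mod_cast hcard
    _ ≤ M * (Finset.Icc ⌊c - D⌋ ⌊c + D⌋).card := by gcongr
    _ ≤ M * (2 * D + 2) := by
        gcongr
        linarith [card_Icc_floor_le (show c - D ≤ c + D by linarith)]

theorem WithLp.prod_dist_le_dist_fst_add_dist_snd {p : ENNReal} [Fact (1 ≤ p)] {α β : Type*}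
    [PseudoMetricSpace α] [PseudoMetricSpace β] (x y : WithLp p (α × β)) :
    dist x y ≤ dist x.fst y.fst + dist x.snd y.snd := by
  rcases eq_or_ne p ⊤ with rfl | hp
  · rw [WithLp.prod_dist_eq_sup]
    exact max_le_add_of_nonneg dist_nonneg dist_nonneg
  · have hnndist : nndist x y ≤ nndist x.fst y.fst + nndist x.snd y.snd := by
      rw [WithLp.prod_nndist_eq_add hp]
      exact NNReal.rpow_add_rpow_le_add _ _
        (ENNReal.toReal_one ▸ ENNReal.toReal_mono hp Fact.out)
    exact_mod_cast hnndist

theorem dist_le_of_floor_snd_eq {α : Type*} [PseudoMetricSpace α] {p q : WithLp 2 (α × ℝ)}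
    {c : α} {R : ℝ} (hp : dist p.fst c ≤ R) (hq : dist q.fst c ≤ R) (hpq : ⌊p.snd⌋ = ⌊q.snd⌋) :
    dist p q ≤ 2 * R + 1 :=
  calc dist p q ≤ dist p.fst q.fst + dist p.snd q.snd := p.prod_dist_le_dist_fst_add_dist_snd q
    _ ≤ (dist p.fst c + dist q.fst c) + 1 := add_le_add (dist_triangle_right _ _ _)
        (Real.dist_eq _ _ ▸ (Int.abs_sub_lt_one_of_floor_eq_floor hpq).le)
    _ ≤ 2 * R + 1 := by linarith

theorem linear_growth_in_cylinder_general {Γ : Type*} [Group Γ] (S : Set Γ) (hSfin : S.Finite)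
    (hSsymm : S = S⁻¹) (hSgen : Subgroup.closure S = ⊤)
    (lam eps : ℝ) (hlam : 1 ≤ lam) (heps : 0 ≤ eps)
    (ψ : Γ → H2R)
    (hlow : ∀ u v : Γ, (1 / lam) * (wordLength S (u⁻¹ * v) : ℝ) - eps ≤ dist (ψ u) (ψ v))
    (hup : ∀ u v : Γ, dist (ψ u) (ψ v) ≤ lam * (wordLength S (u⁻¹ * v) : ℝ) + eps)
    (R : ℝ) :
    ∃ A > (0 : ℝ), ∃ B > (0 : ℝ), ∀ n : ℕ,
      {u : Γ | wordLength S u ≤ n ∧ dist (horiz (ψ u)) (horiz (ψ 1)) ≤ R}.Finite ∧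
      ({u : Γ | wordLength S u ≤ n ∧ dist (horiz (ψ u)) (horiz (ψ 1)) ≤ R}.ncard : ℝ) ≤
        A * n + B := by
  have hlam0 : 0 < lam := by linarith
  set N := ⌈lam * (2 * R + 1 + eps)⌉₊
  set M := {u : Γ | wordLength S u ≤ N}.ncard
  have hM : 0 < M := (Set.ncard_pos (finite_setOf_wordLength_le hSfin hSsymm hSgen N)).2
    ⟨1, by simp [wordLength_one]⟩
  refine ⟨M * (2 * lam), by positivity, M * (2 * eps + 2), by positivity, fun n => ?_⟩
  set T := {u : Γ | wordLength S u ≤ n ∧ dist (horiz (ψ u)) (horiz (ψ 1)) ≤ R}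
  have hT : T.Finite := (finite_setOf_wordLength_le hSfin hSsymm hSgen n).subset fun u hu => hu.1
  have hheight : ∀ u ∈ T, |(ψ u).snd - (ψ 1).snd| ≤ lam * n + eps := fun u hu =>
    calc |(ψ u).snd - (ψ 1).snd| ≤ dist (ψ 1) (ψ u) := by
          rw [← Real.dist_eq, dist_comm]; exact WithLp.dist_snd_le _ _
      _ ≤ lam * n + eps := by
          have hu : (wordLength S u : ℝ) ≤ n := by exact_mod_cast hu.1
          have hψ := hup 1 u
          rw [inv_one, one_mul] at hψ
          exact hψ.trans (by gcongr)
  refine ⟨hT, ?_⟩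
  calc (T.ncard : ℝ) ≤ M * (2 * (lam * n + eps) + 2) :=
        ncard_le_of_floor_fibers hT (fun u => (ψ u).snd) (by positivity) hheight fun k =>
          ncard_le_of_forall_wordLength_inv_mul_le hSfin hSsymm hSgen
            fun u hu v hv => wordLength_inv_mul_le_of_dist_le hlam0 hlow
              (dist_le_of_floor_snd_eq hu.1.2 hv.1.2 (hu.2.trans hv.2.symm))
    _ = M * (2 * lam) * n + M * (2 * eps + 2) := by ring

/-- The number of elements `u` of word length at most `n` whose image under `ψ` stays in
a fixed vertical cylinder of radius `R` about `ψ 1` grows at most linearly in `n`. -/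
theorem linear_growth_in_cylinder {Γ : Type*} [Group Γ] (S : Set Γ) (hSfin : S.Finite)
    (hSsymm : S = S⁻¹) (hSgen : Subgroup.closure S = ⊤)
    (lam eps : ℝ) (hlam : 1 ≤ lam) (heps : 0 ≤ eps)
    (ψ : Γ → H2R)
    (hlow : ∀ u v : Γ, (1 / lam) * (wordLength S (u⁻¹ * v) : ℝ) - eps ≤ dist (ψ u) (ψ v))
    (hup : ∀ u v : Γ, dist (ψ u) (ψ v) ≤ lam * (wordLength S (u⁻¹ * v) : ℝ) + eps)
    (R : ℝ) (hR : 0 < R) :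
    ∃ A > (0 : ℝ), ∃ B > (0 : ℝ), ∀ n : ℕ,
      {u : Γ | wordLength S u ≤ n ∧ dist (horiz (ψ u)) (horiz (ψ 1)) ≤ R}.Finite ∧
      ({u : Γ | wordLength S u ≤ n ∧ dist (horiz (ψ u)) (horiz (ψ 1)) ≤ R}.ncard : ℝ) ≤
        A * n + B :=
  linear_growth_in_cylinder_general S hSfin hSsymm hSgen lam eps hlam heps ψ hlow hup R
end

section
/- Let H be a subgroup of PSL(2,ℝ) whose underlying set is dense in PSL(2,ℝ). Then H is not virtually solvable: H has no solvable subgroup of finite index. -/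
/-- `SL(2,ℝ)`. -/
abbrev SL2R := Matrix.SpecialLinearGroup (Fin 2) ℝ

/-- The topology on `SL(2,ℝ)` induced from the 2×2 real matrices. -/
noncomputable instance : TopologicalSpace SL2R :=
  TopologicalSpace.induced (fun g => (g : Matrix (Fin 2) (Fin 2) ℝ)) inferInstance

/-- `PSL(2,ℝ)` as the quotient of `SL(2,ℝ)` by its center. -/
abbrev PSL2R := SL2R ⧸ Subgroup.center SL2R

/-! If `K` has finite index in the dense subgroup `H`, then the image of `H` in the coset space
of the closure `L` of `K` is finite and dense, so `L` has finite index in `PSL(2,ℝ)`. An infinite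
simple group has no proper subgroup of finite index, hence `L` is everything and `K` is dense.
By continuity of commutators the derived series of the whole group lies in the closures of the
derived series of `K`, so `PSL(2,ℝ)` would be solvable; but it is perfect and nontrivial. -/

section Group

variable {G : Type*} [Group G]

theorem Subgroup.finite_image_mk_of_relIndex_ne_zero {H L : Subgroup G}
    (hLH : L.relIndex H ≠ 0) : ((↑) '' (H : Set G) : Set (G ⧸ L)).Finite := by
  have horbit : MulAction.orbit H ((1 : G) : G ⧸ L) = (↑) '' (H : Set G) := by
    ext; simp [MulAction.mem_orbit_iff, MulAction.compHom_smul_def]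
  have hstab : MulAction.stabilizer H ((1 : G) : G ⧸ L) = L.subgroupOf H := by
    ext; simp [MulAction.compHom_smul_def, QuotientGroup.eq, Subgroup.mem_subgroupOf]
  rw [← horbit]
  apply Set.finite_of_ncard_ne_zero
  rwa [← MulAction.index_stabilizer, hstab]

theorem IsSimpleGroup.eq_top_of_index_ne_zero [IsSimpleGroup G] [Infinite G] {L : Subgroup G}
    (hL : L.index ≠ 0) : L = ⊤ := by
  have : L.FiniteIndex := ⟨hL⟩
  rcases IsSimpleGroup.eq_bot_or_eq_top_of_normal L.normalCore L.normalCore_normal with h | h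
  · have := L.finiteIndex_normalCore
    rw [h, Subgroup.finiteIndex_iff, Subgroup.index_bot] at this
    exact absurd Nat.card_eq_zero_of_infinite this
  · exact top_le_iff.mp (h ▸ L.normalCore_le)

end Group

section TopologicalGroup

variable {G : Type*} [Group G] [TopologicalSpace G] [IsTopologicalGroup G]

theorem Subgroup.commutator_topologicalClosure_le (A B : Subgroup G) :
    ⁅A.topologicalClosure, B.topologicalClosure⁆ ≤ ⁅A, B⁆.topologicalClosure :=
  Subgroup.commutator_le.mpr fun _ ha _ hb =>
    map_mem_closure₂ (by simp only [Function.uncurry_def, commutatorElement_def]; fun_prop) ha hb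
      fun _ ha' _ hb' => Subgroup.commutator_mem_commutator ha' hb'

theorem Subgroup.topologicalClosure_bot [T1Space G] :
    (⊥ : Subgroup G).topologicalClosure = ⊥ :=
  le_bot_iff.mp <| Subgroup.topologicalClosure_minimal _ le_rfl <| by
    simpa only [Subgroup.coe_bot] using isClosed_singleton

theorem derivedSeries_le_topologicalClosure_map_derivedSeries {K : Subgroup G}
    (hK : Dense (K : Set G)) (n : ℕ) :
    derivedSeries G n ≤ ((derivedSeries K n).map K.subtype).topologicalClosure := by
  induction n with
  | zero =>
    rw [derivedSeries_zero, derivedSeries_zero, ← MonoidHom.range_eq_map, K.range_subtype]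
    exact fun x _ => by simp [← SetLike.mem_coe, hK.closure_eq]
  | succ n ih =>
    rw [derivedSeries_succ, derivedSeries_succ, Subgroup.map_commutator]
    exact (Subgroup.commutator_mono ih ih).trans (Subgroup.commutator_topologicalClosure_le _ _)

theorem Group.isSolvable_of_dense [T1Space G] {K : Subgroup G} (hK : Dense (K : Set G))
    [Group.IsSolvable K] : Group.IsSolvable G := by
  obtain ⟨n, hn⟩ := Group.IsSolvable.solvable (G := K)
  refine ⟨n, le_bot_iff.mp ?_⟩
  simpa [hn, Subgroup.topologicalClosure_bot] using
    derivedSeries_le_topologicalClosure_map_derivedSeries hK n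

theorem Subgroup.index_ne_zero_of_dense {H L : Subgroup G} (hH : Dense (H : Set G))
    (hL : IsClosed (L : Set G)) (hLH : L.relIndex H ≠ 0) : L.index ≠ 0 := by
  have : T1Space (G ⧸ L) := QuotientGroup.t1Space_iff.mpr hL
  have hfin := Subgroup.finite_image_mk_of_relIndex_ne_zero hLH
  have hdense : Dense ((↑) '' (H : Set G) : Set (G ⧸ L)) :=
    QuotientGroup.mk_surjective.denseRange.dense_image QuotientGroup.continuous_mk hH
  rw [Subgroup.index_ne_zero_iff_finite, ← Set.finite_univ_iff, ← hdense.closure_eq,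
    hfin.isClosed.closure_eq]
  exact hfin

end TopologicalGroup

open Matrix.SpecialLinearGroup in
instance Matrix.ProjectiveSpecialLinearGroup.infinite {ι F : Type*} [Fintype ι] [DecidableEq ι]
    [Nontrivial ι] [CommRing F] [Infinite F] : Infinite (ProjectiveSpecialLinearGroup ι F) := by
  obtain ⟨i, j, hij⟩ := exists_pair_ne ι
  refine Infinite.of_injective
    (fun b : F => (SpecialLinearGroup.transvection hij b : ProjectiveSpecialLinearGroup ι F))
    fun a b hab => ?_
  rw [QuotientGroup.eq, transvection_inv, ← transvection_add, transvection_mem_center_iff] at hab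
  exact neg_add_eq_zero.mp hab

-- The topology on `SL2R` is definitionally Mathlib's subtype topology on `SL(2,ℝ)`.
instance : IsTopologicalGroup SL2R := Matrix.SpecialLinearGroup.topologicalGroup

instance : T1Space SL2R := Matrix.SpecialLinearGroup.instT1Space

instance : T1Space PSL2R := by
  rw [QuotientGroup.t1Space_iff, Subgroup.coe_center, ← Set.centralizer_univ]
  exact Set.isClosed_centralizer _

instance : IsSimpleGroup PSL2R :=
  Matrix.ProjectiveSpecialLinearGroup.rank_two_simple' ⟨2, two_ne_zero, by norm_num⟩

instance : Group.IsPerfect PSL2R :=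
  ⟨SL2Simple.PSL_commutator_eq_top ⟨2, two_ne_zero, by norm_num⟩⟩

/-- A dense subgroup of `PSL(2,ℝ)` is not virtually solvable. -/
theorem dense_subgroup_not_virtually_solvable (H : Subgroup PSL2R)
    (hd : Dense (H : Set PSL2R)) :
    ¬ ∃ K : Subgroup H, K.index ≠ 0 ∧ IsSolvable K := by
  rintro ⟨K, hK, hKsolv⟩
  have : Group.IsSolvable K := hKsolv
  set K' := K.map H.subtype
  have : Group.IsSolvable K' :=
    Group.isSolvable_of_surjective (f := (K.equivMapOfInjective _ H.subtype_injective).toMonoidHom)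
      (MulEquiv.surjective _)
  have hK'H : K'.relIndex H ≠ 0 := by
    rwa [Subgroup.relIndex, Subgroup.subgroupOf, Subgroup.comap_map_eq_self_of_injective
      H.subtype_injective]
  have hclosure : K'.topologicalClosure = ⊤ :=
    IsSimpleGroup.eq_top_of_index_ne_zero <| Subgroup.index_ne_zero_of_dense hd
      K'.isClosed_topologicalClosure
      (mt (Subgroup.relIndex_eq_zero_of_le_left K'.le_topologicalClosure) hK'H)
  have hdense : Dense (K' : Set PSL2R) := by
    rw [dense_iff_closure_eq, ← Subgroup.topologicalClosure_coe, hclosure, Subgroup.coe_top]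
  exact Group.IsPerfect.not_isSolvable PSL2R (Group.isSolvable_of_dense hdense)
end

section
/- With the sets C_i ⊆ F₂ defined inductively from the generators a, b of the free group F₂ (C₀ = {a, b, a⁻¹, b⁻¹}, C_{i+1} = {[x,y] : x, y ∈ C_i, x ≠ y, x ≠ y⁻¹}): for every i, the map (x, y) ↦ [x,y] = x·y·x⁻¹·y⁻¹ is injective on the set of pairs (x, y) ∈ C_i × C_i with x ≠ y and x ≠ y⁻¹; consequently, for every i, the cardinality of C_{i+1} equals |C_i|·(|C_i| − 2). -/
/-- The first generator `a` of the free group on two generators. -/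
def gena : FreeGroup Bool := FreeGroup.of true

/-- The second generator `b` of the free group on two generators. -/
def genb : FreeGroup Bool := FreeGroup.of false

/-- The sets `C i` of iterated commutators: `C 0 = {a, b, a⁻¹, b⁻¹}` and
`C (i+1) = {[x,y] : x, y ∈ C i, x ≠ y, x ≠ y⁻¹}`. -/
def C : ℕ → Set (FreeGroup Bool)
  | 0 => {gena, genb, gena⁻¹, genb⁻¹}
  | (i + 1) => {w | ∃ x ∈ C i, ∃ y ∈ C i, x ≠ y ∧ x ≠ y⁻¹ ∧ w = x * y * x⁻¹ * y⁻¹}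

namespace CommAux

open FreeGroup

variable {α : Type} {κ : Type}

/-- Swap the two halves of a commutator datum. -/
def flipT (r : α × Bool × α × Bool) : α × Bool × α × Bool :=
  (r.2.2.1, r.2.2.2, r.1, r.2.1)

@[simp] lemma flipT_flipT (r : α × Bool × α × Bool) : flipT (flipT r) = r := rfl

/-- The commutator word associated to a datum. -/
def Wd (r : α × Bool × α × Bool) : List (α × Bool) :=
  [(r.1, r.2.1), (r.2.2.1, r.2.2.2), (r.1, !r.2.1), (r.2.2.1, !r.2.2.2)]

lemma Wd_injective : Function.Injective (Wd (α := α)) := by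
  rintro ⟨s, e, t, d⟩ ⟨s', e', t', d'⟩ h
  simp only [Wd, List.cons.injEq, Prod.mk.injEq, and_true] at h
  obtain ⟨⟨h1, h2⟩, ⟨h3, h4⟩, _⟩ := h
  simp [h1, h2, h3, h4]

lemma invRev_Wd (r : α × Bool × α × Bool) : invRev (Wd r) = Wd (flipT r) := by
  rcases r with ⟨s, e, t, d⟩
  simp [Wd, flipT, invRev]

/-- A word is reduced: no adjacent cancelling pair. -/
def IsRed (L : List (α × Bool)) : Prop :=
  List.Chain' (fun a b => ¬(a.1 = b.1 ∧ a.2 = !b.2)) L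

lemma IsRed.tail {a : α × Bool} {L : List (α × Bool)} (h : IsRed (a :: L)) : IsRed L :=
  List.IsChain.tail h

lemma reduce_eq_self_of_isRed [DecidableEq α] : ∀ {L : List (α × Bool)}, IsRed L → reduce L = L := by
  intro L
  induction L with
  | nil => intro _; rfl
  | cons a L ih =>
    intro h
    rw [reduce.cons, ih h.tail]
    cases L with
    | nil => rfl
    | cons b L' =>
      have hab : ¬(a.1 = b.1 ∧ a.2 = !b.2) := (List.isChain_cons_cons.mp h).1
      simp [hab]

lemma isRed_reduce [DecidableEq α] : ∀ (L : List (α × Bool)), IsRed (reduce L) := by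
  intro L
  induction L with
  | nil => exact List.isChain_nil
  | cons a L ih =>
    rw [reduce.cons]
    cases hL : reduce L with
    | nil => simp [IsRed, List.Chain']
    | cons b L' =>
      rw [hL] at ih
      by_cases hab : a.1 = b.1 ∧ a.2 = !b.2
      · simp only [hab, if_true]
        exact ih.tail
      · simp only [hab, if_false]
        exact List.isChain_cons_cons.mpr ⟨hab, ih⟩

lemma isRed_toWord [DecidableEq α] (w : FreeGroup α) : IsRed w.toWord := by
  rw [← reduce_toWord]; exact isRed_reduce _

lemma isRed_Wd {r : α × Bool × α × Bool} (h : r.1 ≠ r.2.2.1) : IsRed (Wd r) := by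
  rcases r with ⟨s, e, t, d⟩
  simp only [ne_eq] at h
  simp [IsRed, List.Chain', Wd, List.isChain_cons_cons, h, Ne.symm h]

section Core

variable (u : κ → α × Bool × α × Bool)

/-- The datum associated to a letter of the new free group. -/
def raw (p : κ × Bool) : α × Bool × α × Bool :=
  cond p.2 (u p.1) (flipT (u p.1))

variable {u}

lemma raw_good (hg : ∀ k, (u k).1 ≠ (u k).2.2.1) (p : κ × Bool) :
    (raw u p).1 ≠ (raw u p).2.2.1 := by
  rcases p with ⟨k, (_|_)⟩
  · exact (hg k).symm
  · exact hg k

lemma raw_adj (hg : ∀ k, (u k).1 ≠ (u k).2.2.1) (hre : ∀ k k', u k' ≠ flipT (u k))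
    (hui : Function.Injective u) {p q : κ × Bool}
    (h : ¬(p.1 = q.1 ∧ p.2 = !q.2)) : raw u q ≠ flipT (raw u p) := by
  rcases p with ⟨k, ep⟩; rcases q with ⟨k', eq'⟩
  cases ep <;> cases eq' <;>
    simp only [raw, cond_true, cond_false, flipT_flipT] <;> intro hcontr
  · exact hre k' k hcontr.symm
  · exact h ⟨(hui hcontr).symm, rfl⟩
  · have huu : u k' = u k := by
      have h2 := congrArg flipT hcontr; simpa using h2
    exact h ⟨(hui huu).symm, rfl⟩
  · exact hre k k' hcontr

variable (u) in
/-- The word over `α` associated to a word over `κ`. -/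
def wordOf (L : List (κ × Bool)) : List (α × Bool) :=
  (L.map fun p => Wd (raw u p)).flatten

lemma lift_mk_eq_mk_wordOf {u : κ → α × Bool × α × Bool} (L : List (κ × Bool)) :
    FreeGroup.lift (fun k => FreeGroup.mk (Wd (u k))) (FreeGroup.mk L) =
      FreeGroup.mk (wordOf u L) := by
  rw [lift_mk]
  induction L with
  | nil =>
    simp only [List.map_nil, List.prod_nil, wordOf, List.flatten]
    rfl
  | cons p L ih =>
    rcases p with ⟨k, e⟩
    have hhd : (cond e (FreeGroup.mk (Wd (u k))) (FreeGroup.mk (Wd (u k)))⁻¹)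
        = FreeGroup.mk (Wd (raw u (k, e))) := by
      cases e
      · rw [cond_false, inv_mk, invRev_Wd]; rfl
      · rfl
    simp only [List.map_cons, List.prod_cons, ih, hhd]
    rw [mul_mk]
    rfl

lemma core_toWord [DecidableEq α] [DecidableEq κ] (hg : ∀ k, (u k).1 ≠ (u k).2.2.1) (hre : ∀ k k', u k' ≠ flipT (u k))
    (hui : Function.Injective u) :
    ∀ (L : List (κ × Bool)) (p : κ × Bool), IsRed (p :: L) →
      ∃ M, (FreeGroup.mk (wordOf u (p :: L))).toWord =
        ((raw u p).1, (raw u p).2.1) :: ((raw u p).2.2.1, (raw u p).2.2.2) :: M := by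
  intro L
  induction L with
  | nil =>
    intro p _
    have hred : IsRed (Wd (raw u p)) := isRed_Wd (raw_good hg p)
    have hw : wordOf u [p] = Wd (raw u p) := by simp [wordOf]
    rw [hw, toWord_mk, reduce_eq_self_of_isRed hred]
    exact ⟨[((raw u p).1, !(raw u p).2.1), ((raw u p).2.2.1, !(raw u p).2.2.2)], rfl⟩
  | cons q L ih =>
    intro p hpl
    obtain ⟨M, hM⟩ := ih q hpl.tail
    set r := raw u p with hr
    set r' := raw u q with hr'
    have hadj : r' ≠ flipT r := raw_adj hg hre hui (List.isChain_cons_cons.mp hpl).1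
    have hgood : r.1 ≠ r.2.2.1 := raw_good hg p
    set c : α × Bool := (r'.1, r'.2.1) with hc_def
    set d : α × Bool := (r'.2.2.1, r'.2.2.2) with hd_def
    have hsplit : FreeGroup.mk (wordOf u (p :: q :: L)) =
        FreeGroup.mk (Wd r ++ (c :: d :: M)) := by
      have h1 : wordOf u (p :: q :: L) = Wd r ++ wordOf u (q :: L) := by
        simp [wordOf]; rfl
      rw [h1, ← mul_mk, ← mul_mk, ← hM, mk_toWord]
    have hcdM : IsRed (c :: d :: M) := by
      rw [← hM]; exact isRed_toWord _
    have hWr : IsRed (Wd r) := isRed_Wd hgood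
    by_cases hcan : (r.2.2.1 : α) = c.1 ∧ (!r.2.2.2 : Bool) = !c.2
    · -- one cancellation
      have hc1 : c.1 = r.2.2.1 := hcan.1.symm
      have hc2 : c.2 = r.2.2.2 := (Bool.not_inj hcan.2).symm
      have hd : ¬((r.1 : α) = d.1 ∧ (!r.2.1 : Bool) = !d.2) := by
        rintro ⟨hd1, hd2⟩
        apply hadj
        have hd2' : d.2 = r.2.1 := (Bool.not_inj hd2).symm
        have hrr : r' = (c.1, c.2, d.1, d.2) := rfl
        rw [hrr, hc1, hc2, ← hd1, hd2']
        rfl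
      have hstep : FreeGroup.mk (Wd r ++ (c :: d :: M)) =
          FreeGroup.mk ([(r.1, r.2.1), (r.2.2.1, r.2.2.2), (r.1, !r.2.1)] ++ (d :: M)) := by
        have hc : c = ((r.2.2.1 : α), !(!r.2.2.2)) := by
          rw [Bool.not_not]
          exact Prod.ext_iff.mpr ⟨hc1, hc2⟩
        have hlist : Wd r ++ (c :: d :: M) =
            [(r.1, r.2.1), (r.2.2.1, r.2.2.2), (r.1, !r.2.1)] ++
              ((r.2.2.1, !r.2.2.2) :: (r.2.2.1, !(!r.2.2.2)) :: (d :: M)) := by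
          rw [← hc]; rfl
        rw [hlist]
        exact Quot.sound Red.Step.not
      have hredres : IsRed ([(r.1, r.2.1), (r.2.2.1, r.2.2.2), (r.1, !r.2.1)] ++ (d :: M)) := by
        refine List.isChain_append.mpr ⟨?_, hcdM.tail, ?_⟩
        · simp [IsRed, List.Chain', List.isChain_cons_cons, hgood, Ne.symm hgood]
        · intro x hx y hy
          simp only [List.getLast?_cons_cons, List.getLast?_singleton, Option.mem_def,
            Option.some_inj] at hx
          simp only [List.head?_cons, Option.mem_def, Option.some_inj] at hy
          subst hx; subst hy
          exact hd
      rw [hsplit, hstep, toWord_mk, reduce_eq_self_of_isRed hredres]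
      exact ⟨(r.1, !r.2.1) :: d :: M, rfl⟩
    · -- no cancellation
      have hfull : IsRed (Wd r ++ (c :: d :: M)) := by
        refine List.isChain_append.mpr ⟨hWr, hcdM, ?_⟩
        intro x hx y hy
        have hx' : (r.2.2.1, !r.2.2.2) = x := by
          simpa [Wd] using hx
        have hy' : c = y := by
          simpa using hy
        subst hx'; subst hy'
        exact hcan
      rw [hsplit, toWord_mk, reduce_eq_self_of_isRed hfull]
      exact ⟨(r.1, !r.2.1) :: (r.2.2.1, !r.2.2.2) :: c :: d :: M, rfl⟩

lemma core_injective [DecidableEq α] [DecidableEq κ] (hg : ∀ k, (u k).1 ≠ (u k).2.2.1) (hre : ∀ k k', u k' ≠ flipT (u k))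
    (hui : Function.Injective u) :
    Function.Injective (FreeGroup.lift fun k => FreeGroup.mk (Wd (u k))) := by
  rw [injective_iff_map_eq_one]
  intro w hw
  by_contra hne
  have hL : w.toWord ≠ [] := fun h => hne (toWord_eq_nil_iff.mp h)
  cases hLw : w.toWord with
  | nil => exact hL hLw
  | cons p L =>
    have hred : IsRed (p :: L) := hLw ▸ isRed_toWord w
    obtain ⟨M, hM⟩ := core_toWord hg hre hui L p hred
    have : FreeGroup.lift (fun k => FreeGroup.mk (Wd (u k))) (FreeGroup.mk (p :: L)) = 1 := by
      rw [← hLw, mk_toWord]; exact hw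
    rw [lift_mk_eq_mk_wordOf] at this
    rw [this, toWord_one] at hM
    cases hM

end Core


/-! ### The letter map -/

/-- The element of the free group corresponding to a signed letter. -/
def beta {ι : Type} (f : ι → FreeGroup Bool) (p : ι × Bool) : FreeGroup Bool :=
  FreeGroup.lift f (FreeGroup.mk [p])

lemma beta_eq {ι : Type} (f : ι → FreeGroup Bool) (p : ι × Bool) :
    beta f p = cond p.2 (f p.1) (f p.1)⁻¹ := by
  rw [beta, lift_mk]; simp

lemma beta_inj {ι : Type} {f : ι → FreeGroup Bool}
    (hinj : Function.Injective (FreeGroup.lift f)) : Function.Injective (beta f) := by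
  classical
  intro p q h
  have h2 := hinj h
  have h3 := congrArg toWord h2
  rw [toWord_mk, toWord_mk, reduce_singleton, reduce_singleton] at h3
  exact List.singleton_injective h3

lemma beta_inv {ι : Type} (f : ι → FreeGroup Bool) (q : ι × Bool) :
    (beta f q)⁻¹ = beta f (q.1, !q.2) := by
  rw [beta, beta, ← _root_.map_inv, inv_mk]
  simp [invRev]

lemma beta_pair {ι : Type} {f : ι → FreeGroup Bool}
    (hinj : Function.Injective (FreeGroup.lift f)) {p q : ι × Bool} :
    (beta f p ≠ beta f q ∧ beta f p ≠ (beta f q)⁻¹) ↔ p.1 ≠ q.1 := by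
  rw [beta_inv]
  constructor
  · rintro ⟨h1, h2⟩ heq
    by_cases hb : p.2 = q.2
    · exact h1 (congrArg (beta f) (Prod.ext_iff.mpr ⟨heq, hb⟩))
    · have hb2 : p.2 = !q.2 := by
        cases hp2 : p.2 <;> cases hq2 : q.2 <;> simp_all
      exact h2 (congrArg (beta f) (Prod.ext_iff.mpr ⟨heq, hb2⟩))
  · intro hne
    constructor
    · intro heq
      have h2 := beta_inj hinj heq
      exact hne (by simpa using congrArg Prod.fst h2)
    · intro heq
      have h2 := beta_inj hinj heq
      exact hne (by simpa using congrArg Prod.fst h2)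

lemma beta_comm {ι : Type} (f : ι → FreeGroup Bool) (p q : ι × Bool) :
    beta f p * beta f q * (beta f p)⁻¹ * (beta f q)⁻¹ =
      FreeGroup.lift f (FreeGroup.mk (Wd (p.1, p.2, q.1, q.2))) := by
  have hmk : FreeGroup.mk [p] * FreeGroup.mk [q] * (FreeGroup.mk [p])⁻¹ * (FreeGroup.mk [q])⁻¹
      = FreeGroup.mk (Wd (p.1, p.2, q.1, q.2)) := by
    rw [inv_mk, inv_mk, mul_mk, mul_mk, mul_mk]
    simp [invRev, Wd]
  rw [beta, beta, ← _root_.map_inv, ← _root_.map_inv, ← _root_.map_mul, ← _root_.map_mul,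
    ← _root_.map_mul]
  exact congrArg (FreeGroup.lift f) hmk

/-! ### The invariant -/

/-- `C i` is the set of letters of a finite free family. -/
def GoodLevel (i : ℕ) : Prop :=
  ∃ (ι : Type) (_ : Finite ι) (f : ι → FreeGroup Bool),
    Function.Injective (FreeGroup.lift f) ∧ C i = Set.range (beta f)

lemma goodLevel_zero : GoodLevel 0 := by
  refine ⟨Bool, inferInstance, FreeGroup.of, ?_, ?_⟩
  · have h : FreeGroup.lift (FreeGroup.of (α := Bool)) = MonoidHom.id _ :=
      lift_of_eq_id Bool
    rw [h]
    exact fun a b hab => hab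
  · ext w
    constructor
    · rintro (rfl | rfl | rfl | rfl)
      · exact ⟨(true, true), by simp [beta_eq, gena]⟩
      · exact ⟨(false, true), by simp [beta_eq, genb]⟩
      · exact ⟨(true, false), by simp [beta_eq, gena]⟩
      · exact ⟨(false, false), by simp [beta_eq, genb]⟩
    · rintro ⟨⟨s, e⟩, rfl⟩
      cases s <;> cases e <;> simp [beta_eq, gena, genb, C] <;> tauto

/-! ### Quotient construction for the step -/

variable (ι : Type)

/-- Admissible commutator data. -/
def RT := {r : ι × Bool × ι × Bool // r.1 ≠ r.2.2.1}

/-- Identify a datum with its flip. -/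
instance rSetoid : Setoid (RT ι) :=
  ⟨fun x y => x.1 = y.1 ∨ x.1 = flipT y.1, by
    constructor
    · intro x; exact Or.inl rfl
    · rintro x y (h | h)
      · exact Or.inl h.symm
      · exact Or.inr (by rw [h, flipT_flipT])
    · rintro x y z (h1 | h1) (h2 | h2)
      · exact Or.inl (h1.trans h2)
      · exact Or.inr (h1.trans h2)
      · exact Or.inr (by rw [h1, h2])
      · exact Or.inl (by rw [h1, h2, flipT_flipT])⟩

/-- One representative per flip-orbit. -/
abbrev QT := Quotient (rSetoid ι)

instance [Finite ι] : Finite (RT ι) := Subtype.finite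

/-- The chosen representative datum. -/
noncomputable def uT : QT ι → ι × Bool × ι × Bool := fun q => q.out.1

variable {ι}

lemma uT_good (q : QT ι) : (uT ι q).1 ≠ (uT ι q).2.2.1 := q.out.2

lemma uT_inj : Function.Injective (uT ι) := by
  intro q q' h
  have h2 : q.out = q'.out := Subtype.ext h
  rw [← Quotient.out_eq q, ← Quotient.out_eq q', h2]

lemma uT_rep (q q' : QT ι) : uT ι q' ≠ flipT (uT ι q) := by
  intro h
  have hqq : q' = q := by
    rw [← Quotient.out_eq q', ← Quotient.out_eq q]
    exact Quotient.sound (Or.inr h)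
  subst hqq
  exact uT_good q' (congrArg Prod.fst h)

lemma uT_cover (r : RT ι) : ∃ q : QT ι, uT ι q = r.1 ∨ uT ι q = flipT r.1 := by
  refine ⟨⟦r⟧, ?_⟩
  obtain h | h := Quotient.mk_out (s := rSetoid ι) r
  · exact Or.inl h
  · exact Or.inr h

/-! ### The induction step -/

lemma goodLevel_step {i : ℕ} (h : GoodLevel i) : GoodLevel (i + 1) := by
  classical
  obtain ⟨ι, hfin, f, hinj, hC⟩ := h
  haveI := hfin
  refine ⟨QT ι, inferInstance, fun q => FreeGroup.lift f (FreeGroup.mk (Wd (uT ι q))), ?_, ?_⟩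
  · have hcomp : FreeGroup.lift (fun q => FreeGroup.lift f (FreeGroup.mk (Wd (uT ι q)))) =
        (FreeGroup.lift f).comp
          (FreeGroup.lift (fun q => FreeGroup.mk (Wd (uT ι q)))) := by
      apply FreeGroup.ext_hom
      intro q
      simp [lift_apply_of]
    rw [hcomp]
    exact hinj.comp (core_injective uT_good uT_rep uT_inj)
  · have hbeta : ∀ p : QT ι × Bool,
        beta (fun q => FreeGroup.lift f (FreeGroup.mk (Wd (uT ι q)))) p =
          FreeGroup.lift f (FreeGroup.mk (Wd
            (cond p.2 (uT ι p.1) (flipT (uT ι p.1))))) := by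
      rintro ⟨q, e⟩
      cases e
      · rw [beta_eq, cond_false, cond_false, ← _root_.map_inv, inv_mk, invRev_Wd]
      · simp [beta_eq]
    ext w
    simp only [C, Set.mem_setOf_eq, Set.mem_range]
    constructor
    · rintro ⟨x, hx, y, hy, hxy, hxyi, rfl⟩
      rw [hC] at hx hy
      obtain ⟨p, rfl⟩ := hx
      obtain ⟨q, rfl⟩ := hy
      have hpq : p.1 ≠ q.1 := (beta_pair hinj).mp ⟨hxy, hxyi⟩
      obtain ⟨q0, hq0 | hq0⟩ := uT_cover (⟨(p.1, p.2, q.1, q.2), hpq⟩ : RT ι)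
      · refine ⟨(q0, true), ?_⟩
        rw [hbeta, cond_true, hq0, beta_comm]
      · refine ⟨(q0, false), ?_⟩
        rw [hbeta, cond_false, hq0, flipT_flipT, beta_comm]
    · rintro ⟨p, rfl⟩
      rw [hbeta]
      set r := cond p.2 (uT ι p.1) (flipT (uT ι p.1)) with hr
      have hgood : r.1 ≠ r.2.2.1 := by
        rcases p with ⟨q, (_ | _)⟩
        · exact (uT_good q).symm
        · exact uT_good q
      refine ⟨beta f (r.1, r.2.1), ?_, beta f (r.2.2.1, r.2.2.2), ?_, ?_, ?_, ?_⟩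
      · rw [hC]; exact ⟨(r.1, r.2.1), rfl⟩
      · rw [hC]; exact ⟨(r.2.2.1, r.2.2.2), rfl⟩
      · exact ((beta_pair hinj).mpr hgood).1
      · exact ((beta_pair hinj).mpr hgood).2
      · rw [beta_comm]

lemma goodLevel (i : ℕ) : GoodLevel i := by
  induction i with
  | zero => exact goodLevel_zero
  | succ i ih => exact goodLevel_step ih


lemma card_pairs (A : Type) [Finite A] :
    Nat.card {z : (A × Bool) × (A × Bool) // z.1.1 ≠ z.2.1} =
      Nat.card (A × Bool) * (Nat.card (A × Bool) - 2) := by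
  classical
  haveI : Fintype A := Fintype.ofFinite A
  rw [Nat.card_eq_fintype_card, Nat.card_eq_fintype_card]
  have e : {z : (A × Bool) × (A × Bool) // z.1.1 ≠ z.2.1} ≃
      Σ ℓ : A × Bool, {m : A × Bool // ¬(m.1 = ℓ.1)} :=
    { toFun := fun z => ⟨z.1.1, ⟨z.1.2, fun h => z.2 h.symm⟩⟩
      invFun := fun w => ⟨(w.1, w.2.1), fun h => w.2.2 h.symm⟩
      left_inv := fun z => rfl
      right_inv := fun w => rfl }
  rw [Fintype.card_congr e, Fintype.card_sigma]
  have hfix : ∀ ℓ : A × Bool, Fintype.card {m : A × Bool // ¬(m.1 = ℓ.1)} =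
      Fintype.card (A × Bool) - 2 := by
    intro ℓ
    rw [Fintype.card_subtype_compl]
    congr 1
    have e2 : {m : A × Bool // m.1 = ℓ.1} ≃ Bool :=
      { toFun := fun m => m.1.2
        invFun := fun b => ⟨(ℓ.1, b), rfl⟩
        left_inv := fun m => Subtype.ext (Prod.ext_iff.mpr ⟨m.2.symm, rfl⟩)
        right_inv := fun b => rfl }
    rw [Fintype.card_congr e2, Fintype.card_bool]
  simp only [hfix]
  rw [Finset.sum_const, Finset.card_univ, smul_eq_mul]

lemma main_of_good {i : ℕ} (h : GoodLevel i) :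
    Set.InjOn (fun p : FreeGroup Bool × FreeGroup Bool => p.1 * p.2 * p.1⁻¹ * p.2⁻¹)
      {p : FreeGroup Bool × FreeGroup Bool |
        p.1 ∈ C i ∧ p.2 ∈ C i ∧ p.1 ≠ p.2 ∧ p.1 ≠ p.2⁻¹} ∧
    (C (i + 1)).ncard = (C i).ncard * ((C i).ncard - 2) := by
  classical
  obtain ⟨ι, hfin, f, hinj, hC⟩ := h
  haveI := hfin
  have hInj : Set.InjOn (fun p : FreeGroup Bool × FreeGroup Bool => p.1 * p.2 * p.1⁻¹ * p.2⁻¹)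
      {p : FreeGroup Bool × FreeGroup Bool |
        p.1 ∈ C i ∧ p.2 ∈ C i ∧ p.1 ≠ p.2 ∧ p.1 ≠ p.2⁻¹} := by
    rintro ⟨x, y⟩ hxy ⟨x', y'⟩ hxy' heq
    obtain ⟨hx, hy, h1, h2⟩ := hxy
    obtain ⟨hx', hy', h1', h2'⟩ := hxy'
    rw [hC] at hx hy hx' hy'
    obtain ⟨p, rfl⟩ := hx
    obtain ⟨q, rfl⟩ := hy
    obtain ⟨p', rfl⟩ := hx'
    obtain ⟨q', rfl⟩ := hy'
    have hpq : p.1 ≠ q.1 := (beta_pair hinj).mp ⟨h1, h2⟩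
    have hpq' : p'.1 ≠ q'.1 := (beta_pair hinj).mp ⟨h1', h2'⟩
    simp only at heq
    rw [beta_comm, beta_comm] at heq
    have hmk := hinj heq
    have hw := congrArg toWord hmk
    rw [toWord_mk, toWord_mk, reduce_eq_self_of_isRed (isRed_Wd hpq),
      reduce_eq_self_of_isRed (isRed_Wd hpq')] at hw
    have hr := Wd_injective hw
    simp only [Prod.mk.injEq] at hr
    obtain ⟨e1, e2, e3, e4⟩ := hr
    have hp : p = p' := Prod.ext_iff.mpr ⟨e1, e2⟩
    have hq : q = q' := Prod.ext_iff.mpr ⟨e3, e4⟩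
    rw [hp, hq]
  refine ⟨hInj, ?_⟩
  have hCcard : (C i).ncard = Nat.card (ι × Bool) := by
    rw [hC, ← Nat.card_coe_set_eq, Nat.card_range_of_injective (beta_inj hinj)]
  have hIm : C (i + 1) = (fun p : FreeGroup Bool × FreeGroup Bool => p.1 * p.2 * p.1⁻¹ * p.2⁻¹) ''
      {p : FreeGroup Bool × FreeGroup Bool |
        p.1 ∈ C i ∧ p.2 ∈ C i ∧ p.1 ≠ p.2 ∧ p.1 ≠ p.2⁻¹} := by
    ext w
    simp only [C, Set.mem_setOf_eq, Set.mem_image, Prod.exists]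
    constructor
    · rintro ⟨x, hx, y, hy, h1, h2, rfl⟩
      exact ⟨x, y, ⟨hx, hy, h1, h2⟩, rfl⟩
    · rintro ⟨x, y, ⟨hx, hy, h1, h2⟩, rfl⟩
      exact ⟨x, hx, y, hy, h1, h2, rfl⟩
  have hπinj : Function.Injective (fun z : {z : (ι × Bool) × (ι × Bool) // z.1.1 ≠ z.2.1} =>
      ((beta f z.1.1, beta f z.1.2) : FreeGroup Bool × FreeGroup Bool)) := by
    intro z z' hzz
    have h1 := beta_inj hinj (congrArg Prod.fst hzz)
    have h2 := beta_inj hinj (congrArg Prod.snd hzz)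
    exact Subtype.ext (Prod.ext_iff.mpr ⟨h1, h2⟩)
  have hP : {p : FreeGroup Bool × FreeGroup Bool |
        p.1 ∈ C i ∧ p.2 ∈ C i ∧ p.1 ≠ p.2 ∧ p.1 ≠ p.2⁻¹}
      = Set.range (fun z : {z : (ι × Bool) × (ι × Bool) // z.1.1 ≠ z.2.1} =>
          ((beta f z.1.1, beta f z.1.2) : FreeGroup Bool × FreeGroup Bool)) := by
    ext z
    simp only [Set.mem_setOf_eq, Set.mem_range]
    constructor
    · rintro ⟨hx, hy, h1, h2⟩
      rw [hC] at hx hy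
      obtain ⟨p, hp⟩ := hx
      obtain ⟨q, hq⟩ := hy
      refine ⟨⟨(p, q), ?_⟩, ?_⟩
      · exact (beta_pair hinj).mp ⟨by rw [hp, hq]; exact h1, by rw [hp, hq]; exact h2⟩
      · exact Prod.ext_iff.mpr ⟨hp, hq⟩
    · rintro ⟨⟨⟨p, q⟩, hpq⟩, rfl⟩
      refine ⟨?_, ?_, ?_, ?_⟩
      · rw [hC]; exact ⟨p, rfl⟩
      · rw [hC]; exact ⟨q, rfl⟩
      · exact ((beta_pair hinj).mpr hpq).1
      · exact ((beta_pair hinj).mpr hpq).2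
  have hPcard : {p : FreeGroup Bool × FreeGroup Bool |
        p.1 ∈ C i ∧ p.2 ∈ C i ∧ p.1 ≠ p.2 ∧ p.1 ≠ p.2⁻¹}.ncard
      = Nat.card (ι × Bool) * (Nat.card (ι × Bool) - 2) := by
    rw [hP, ← Nat.card_coe_set_eq, Nat.card_range_of_injective hπinj, card_pairs ι]
  rw [hIm, Set.ncard_image_of_injOn hInj, hPcard, hCcard]

end CommAux


/-- Distinct admissible pairs of elements of `C i` have distinct commutators; hence
`|C (i+1)| = |C i| · (|C i| - 2)`. -/
theorem commutator_injOn_and_card (i : ℕ) :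
    Set.InjOn (fun p : FreeGroup Bool × FreeGroup Bool => p.1 * p.2 * p.1⁻¹ * p.2⁻¹)
      {p : FreeGroup Bool × FreeGroup Bool |
        p.1 ∈ C i ∧ p.2 ∈ C i ∧ p.1 ≠ p.2 ∧ p.1 ≠ p.2⁻¹} ∧
    (C (i + 1)).ncard = (C i).ncard * ((C i).ncard - 2) :=
  CommAux.main_of_good (CommAux.goodLevel i)
end

section
/- With the sets C_i ⊆ F₂ defined inductively from the generators a, b of the free group F₂ (C₀ = {a, b, a⁻¹, b⁻¹}, C_{i+1} = {[x,y] : x, y ∈ C_i, x ≠ y, x ≠ y⁻¹}): for every i ≥ 0, every element of C_i is a product of exactly 4^i elements of the set {a, b, a⁻¹, b⁻¹}, and the cardinality of C_i is at least 2^(2^i). -/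
open scoped commutatorElement

universe u

namespace FreeGroup

variable {κ : Type u}

theorem mk_singleton_inv (p : κ × Bool) : (mk [p])⁻¹ = mk [(p.1, !p.2)] := by
  simp [inv_mk, invRev]

variable [DecidableEq κ]

theorem mk_singleton_injective : Function.Injective fun p : κ × Bool => mk [p] := by
  intro p q h
  simpa [toWord_mk, reduce_singleton] using congrArg toWord h

theorem toWord_mk_singleton_mul {p : κ × Bool} {g : FreeGroup κ}
    (hg : g.toWord.head? ≠ some (p.1, !p.2)) : (mk [p] * g).toWord = p :: g.toWord := by
  rw [toWord_mul, toWord_mk, reduce_singleton, List.singleton_append, reduce.cons, reduce_toWord]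
  cases h : g.toWord with
  | nil => rfl
  | cons a w =>
    rw [h] at hg
    refine if_neg fun hpa => hg ?_
    simp [hpa.1, hpa.2]

theorem take_two_toWord_commutator_mul {p q : κ × Bool} (hpq : p.1 ≠ q.1) {v : FreeGroup κ}
    (hv : v.toWord.take 2 ≠ [q, p]) : (⁅mk [p], mk [q]⁆ * v).toWord.take 2 = [p, q] := by
  -- With `v = q u`, the commutator times `v` is `p q p⁻¹ u`, and `u` cannot start with `p`.
  obtain ⟨u, rfl⟩ : ∃ u, v = mk [q] * u := ⟨(mk [q])⁻¹ * v, by group⟩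
  have hu : u.toWord.head? ≠ some p := by
    intro hu
    have hq : u.toWord.head? ≠ some (q.1, !q.2) := by
      rw [hu]; simp [Prod.ext_iff, hpq]
    rw [toWord_mk_singleton_mul hq] at hv
    cases hw : u.toWord <;> simp_all
  have h₁ : (mk [(p.1, !p.2)] * u).toWord = (p.1, !p.2) :: u.toWord :=
    toWord_mk_singleton_mul (by simpa using hu)
  have h₂ : (mk [q] * (mk [(p.1, !p.2)] * u)).toWord = q :: (p.1, !p.2) :: u.toWord := by
    rw [toWord_mk_singleton_mul (by simp [h₁, Prod.ext_iff, hpq]), h₁]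
  have h₃ : (mk [p] * (mk [q] * (mk [(p.1, !p.2)] * u))).toWord =
      p :: q :: (p.1, !p.2) :: u.toWord := by
    rw [toWord_mk_singleton_mul (by simp [h₂, Prod.ext_iff, hpq.symm]), h₂]
  have : ⁅mk [p], mk [q]⁆ * (mk [q] * u) = mk [p] * (mk [q] * (mk [(p.1, !p.2)] * u)) := by
    rw [← mk_singleton_inv, commutatorElement_def]; group
  rw [this, h₃]
  rfl

theorem injective_lift_commutator {ι : Type u} [Nontrivial ι] (p q : ι → κ × Bool)
    (hpq : ∀ i, (p i).1 ≠ (q i).1) (hinj : Function.Injective fun i => (p i, q i))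
    (hswap : ∀ i j, (p i, q i) ≠ (q j, p j)) :
    Function.Injective (lift fun i => ⁅mk [p i], mk [q i]⁆) := by
  refine injective_lift_of_ping_pong (G := FreeGroup κ) _
    (fun i => {w : FreeGroup κ | w.toWord.take 2 = [p i, q i]})
    (fun i => {w : FreeGroup κ | w.toWord.take 2 = [q i, p i]})
    (fun i => ?_) (fun i j hij => ?_) (fun i j hij => ?_) (fun i j => ?_) (fun i => ?_)
    (fun i => ?_)
  · exact ⟨_, take_two_toWord_commutator_mul (v := 1) (hpq i) (by simp)⟩
  · refine Set.disjoint_left.2 fun w (hi : _ = _) (hj : _ = _) => hij (hinj ?_)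
    simpa [hi] using hj
  · refine Set.disjoint_left.2 fun w (hi : _ = _) (hj : _ = _) => hij (hinj ?_)
    simpa [hi, and_comm] using hj
  · refine Set.disjoint_left.2 fun w (hi : _ = _) (hj : _ = _) => hswap i j ?_
    simpa [hi] using hj
  · rintro _ ⟨v, hv, rfl⟩
    exact take_two_toWord_commutator_mul (hpq i) hv
  · rintro _ ⟨v, hv, rfl⟩
    rw [Pi.inv_apply, commutatorElement_inv]
    exact take_two_toWord_commutator_mul (hpq i).symm hv

theorem of_ne_inv_of (a b : κ) : of a ≠ (of b)⁻¹ := by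
  intro h
  simpa [toWord_of, toWord_inv, invRev] using congrArg toWord h

end FreeGroup

open FreeGroup

section FreeFamilies

variable {G : Type*} [Group G]

def admissibleCommutators (S : Set G) : Set G :=
  {w | ∃ x ∈ S, ∃ y ∈ S, x ≠ y ∧ x ≠ y⁻¹ ∧ w = ⁅x, y⁆}

theorem inv_mem_admissibleCommutators {S : Set G} {w : G} (hw : w ∈ admissibleCommutators S) :
    w⁻¹ ∈ admissibleCommutators S := by
  obtain ⟨x, hx, y, hy, hxy, hxy', rfl⟩ := hw
  exact ⟨y, hy, x, hx, hxy.symm, fun h => hxy' (by rw [h, inv_inv]), commutatorElement_inv x y⟩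

theorem Set.Finite.admissibleCommutators {S : Set G} (hS : S.Finite) :
    (admissibleCommutators S).Finite :=
  (hS.image2 (fun x y => ⁅x, y⁆) hS).subset <| by
    rintro _ ⟨x, hx, y, hy, -, -, rfl⟩
    exact Set.mem_image2_of_mem hx hy

def ContainsFreeFamily (S : Set G) (ι : Type*) : Prop :=
  ∃ t : ι → G, Function.Injective (lift t) ∧ ∀ i, t i ∈ S ∧ (t i)⁻¹ ∈ S

namespace ContainsFreeFamily

variable {S : Set G}

theorem of_equiv {ι κ : Type*} (h : ContainsFreeFamily S ι) (e : κ ≃ ι) :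
    ContainsFreeFamily S κ := by
  obtain ⟨t, ht, htS⟩ := h
  refine ⟨t ∘ e, ?_, fun i => htS (e i)⟩
  have : lift (t ∘ e) = (lift t).comp (freeGroupCongr e).toMonoidHom :=
    ext_hom _ _ fun a => by simp
  rw [this, MonoidHom.coe_comp]
  exact ht.comp (freeGroupCongr e).injective

theorem two_mul_card_le_ncard {ι : Type*} [Finite ι] (h : ContainsFreeFamily S ι)
    (hS : S.Finite) : 2 * Nat.card ι ≤ S.ncard := by
  classical
  obtain ⟨t, ht, htS⟩ := h
  have ht_inj : Function.Injective t := by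
    simpa [Function.comp_def] using ht.comp of_injective
  have hsum : Function.Injective (Sum.elim t fun i => (t i)⁻¹) :=
    ht_inj.sumElim (inv_injective.comp ht_inj) fun i j hij =>
      of_ne_inv_of i j (ht (by simpa using hij))
  calc 2 * Nat.card ι = (Set.range (Sum.elim t fun i => (t i)⁻¹)).ncard := by
        rw [Set.ncard_range_of_injective hsum, Nat.card_sum]; ring
    _ ≤ S.ncard := Set.ncard_le_ncard (Set.range_subset_iff.2 fun
        | .inl i => (htS i).1
        | .inr i => (htS i).2) hS

theorem admissibleCommutators {κ : Type u} [LinearOrder κ] (h : ContainsFreeFamily S κ) :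
    ContainsFreeFamily (_root_.admissibleCommutators S)
      ({x : κ × κ // x.1 < x.2} × Bool × Bool) := by
  obtain ⟨t, ht, htS⟩ := h
  set ι := {x : κ × κ // x.1 < x.2} × Bool × Bool
  let p : ι → κ × Bool := fun x => (x.1.1.1, x.2.1)
  let q : ι → κ × Bool := fun x => (x.1.1.2, x.2.2)
  let c : ι → FreeGroup κ := fun x => ⁅mk [p x], mk [q x]⁆
  have hc : Function.Injective (lift c) := by
    rcases isEmpty_or_nonempty ι with hι | hι
    · exact Function.injective_of_subsingleton _
    obtain ⟨x⟩ := hι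
    have : Nontrivial ι :=
      ⟨⟨x, (x.1, !x.2.1, x.2.2), fun h => by simpa using congrArg (fun y : ι => y.2.1) h⟩⟩
    refine injective_lift_commutator p q (fun x => x.1.2.ne) ?_ ?_
    · rintro ⟨⟨⟨j, k⟩, hjk⟩, ε, δ⟩ ⟨⟨⟨j', k'⟩, hjk'⟩, ε', δ'⟩ h
      simp only [p, q, Prod.mk.injEq] at h
      obtain ⟨⟨rfl, rfl⟩, rfl, rfl⟩ := h
      rfl
    · rintro ⟨⟨⟨j, k⟩, hjk⟩, ε, δ⟩ ⟨⟨⟨j', k'⟩, hjk'⟩, ε', δ'⟩ h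
      simp only [p, q, Prod.mk.injEq] at h
      obtain ⟨⟨rfl, -⟩, rfl, -⟩ := h
      exact lt_asymm hjk hjk'
  have hletter (a : κ × Bool) : lift t (mk [a]) ∈ S := by
    obtain ⟨a, _ | _⟩ := a <;> simp [lift_mk, htS]
  have hletter_ne {a b : κ × Bool} (hab : a.1 ≠ b.1) : lift t (mk [a]) ≠ lift t (mk [b]) :=
    ht.ne (mk_singleton_injective.ne fun h => hab (congrArg Prod.fst h))
  refine ⟨fun x => lift t (c x), ?_, fun x => ?_⟩
  · have : lift (fun x => lift t (c x)) = (lift t).comp (lift c) := ext_hom _ _ fun x => by simp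
    rw [this, MonoidHom.coe_comp]
    exact ht.comp hc
  · have hmem : lift t (c x) ∈ _root_.admissibleCommutators S := by
      refine ⟨_, hletter (p x), _, hletter (q x), hletter_ne x.1.2.ne, ?_,
        map_commutatorElement _ _ _⟩
      rw [← _root_.map_inv, mk_singleton_inv]
      exact hletter_ne x.1.2.ne
    exact ⟨hmem, inv_mem_admissibleCommutators hmem⟩

end ContainsFreeFamily

end FreeFamilies

section Words

variable {G : Type*} [Group G]

def productsOfLength (S : Set G) (n : ℕ) : Set G :=
  {w | ∃ L : List G, L.length = n ∧ (∀ g ∈ L, g ∈ S) ∧ L.prod = w}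

theorem commutatorElement_list_prod (L₁ L₂ : List G) :
    ⁅L₁.prod, L₂.prod⁆ =
      (L₁ ++ L₂ ++ (L₁.map (·⁻¹)).reverse ++ (L₂.map (·⁻¹)).reverse).prod := by
  simp only [commutatorElement_def, List.prod_append, List.prod_inv_reverse]

theorem commutatorElement_mem_productsOfLength {S : Set G} (hS : ∀ g ∈ S, g⁻¹ ∈ S) {n : ℕ}
    {x y : G} (hx : x ∈ productsOfLength S n) (hy : y ∈ productsOfLength S n) :
    ⁅x, y⁆ ∈ productsOfLength S (4 * n) := by
  obtain ⟨L₁, hL₁, hL₁S, rfl⟩ := hx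
  obtain ⟨L₂, hL₂, hL₂S, rfl⟩ := hy
  refine ⟨_, ?_, ?_, (commutatorElement_list_prod L₁ L₂).symm⟩
  · simp only [List.length_append, List.length_reverse, List.length_map, hL₁, hL₂]
    ring
  · simp only [List.mem_append, List.mem_reverse, List.mem_map]
    rintro g (((hg | hg) | ⟨g, hg, rfl⟩) | ⟨g, hg, rfl⟩)
    exacts [hL₁S g hg, hL₂S g hg, hS g (hL₁S g hg), hS g (hL₂S g hg)]

end Words

theorem List.exists_ofFn_eq {α : Type*} {n : ℕ} {L : List α} (h : L.length = n) :
    ∃ f : Fin n → α, List.ofFn f = L := by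
  subst h
  exact ⟨L.get, List.ofFn_get L⟩

theorem add_two_le_eight_mul_choose_two {m n : ℕ} (hm : 1 ≤ m) (h : m + 2 ≤ 2 * n) :
    m ^ 2 + 2 ≤ 8 * n.choose 2 := by
  obtain ⟨k, rfl⟩ : ∃ k, n = k + 1 := ⟨n - 1, by omega⟩
  have := Nat.add_one_mul_choose_eq k 1
  rw [Nat.choose_one_right] at this
  nlinarith

theorem C_succ (i : ℕ) : C (i + 1) = admissibleCommutators (C i) := rfl

theorem inv_mem_C_zero {g : FreeGroup Bool} (hg : g ∈ C 0) : g⁻¹ ∈ C 0 := by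
  rcases hg with rfl | rfl | rfl | rfl <;> simp [C]

theorem C_subset_productsOfLength (i : ℕ) : C i ⊆ productsOfLength (C 0) (4 ^ i) := by
  induction i with
  | zero => exact fun w hw => ⟨[w], rfl, by simpa using hw, List.prod_singleton⟩
  | succ i ih =>
    rintro _ ⟨x, hx, y, hy, -, -, rfl⟩
    rw [pow_succ', ← commutatorElement_def]
    exact commutatorElement_mem_productsOfLength (fun _ => inv_mem_C_zero) (ih hx) (ih hy)

theorem C_finite (i : ℕ) : (C i).Finite := by
  induction i with
  | zero => simp [C]
  | succ i ih => exact ih.admissibleCommutators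

theorem containsFreeFamily_C_zero : ContainsFreeFamily (C 0) Bool :=
  ⟨of, by simpa [lift_of_eq_id] using Function.injective_id, by
    rintro (_ | _) <;> simp [C, gena, genb]⟩

theorem exists_containsFreeFamily_C (i : ℕ) :
    ∃ n, 2 ^ 2 ^ i + 2 ≤ 2 * n ∧ ContainsFreeFamily (C i) (Fin n) := by
  induction i with
  | zero => exact ⟨2, by norm_num, containsFreeFamily_C_zero.of_equiv finTwoEquiv⟩
  | succ i ih =>
    obtain ⟨n, hn, h⟩ := ih
    have hcard : Fintype.card ({x : Fin n × Fin n // x.1 < x.2} × Bool × Bool) =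
        4 * n.choose 2 := by
      simp [Fintype.card_subtype, Fintype.card_product_filter_lt, mul_comm]
    refine ⟨4 * n.choose 2, ?_, ?_⟩
    · rw [pow_succ, pow_mul]
      linarith [add_two_le_eight_mul_choose_two Nat.one_le_two_pow hn]
    · rw [C_succ]
      exact h.admissibleCommutators.of_equiv (Fintype.equivFinOfCardEq hcard).symm

/-- Every element of `C i` is a product of exactly `4^i` elements of
`{a, b, a⁻¹, b⁻¹}`, and `|C i| ≥ 2^(2^i)`. -/
theorem C_word_length_and_card (i : ℕ) :
    (∀ w ∈ C i, ∃ f : Fin (4 ^ i) → FreeGroup Bool,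
      (∀ j, f j ∈ ({gena, genb, gena⁻¹, genb⁻¹} : Set (FreeGroup Bool))) ∧
      (List.ofFn f).prod = w) ∧
    2 ^ (2 ^ i) ≤ (C i).ncard := by
  refine ⟨fun w hw => ?_, ?_⟩
  · obtain ⟨L, hL, hLC, rfl⟩ := C_subset_productsOfLength i hw
    obtain ⟨f, rfl⟩ := List.exists_ofFn_eq hL
    exact ⟨f, List.forall_mem_ofFn_iff.1 hLC, rfl⟩
  · obtain ⟨n, hn, h⟩ := exists_containsFreeFamily_C i
    have := h.two_mul_card_le_ncard (C_finite i)
    rw [Nat.card_fin] at this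
    omega
end
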